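/- arXiv:2601.04677 — 7 statements merged into one kernel-verified Lean document; each statement's English description precedes it below -/
import Mathlib

section
/- Assume κ'(1) < 1. Then for every t ∈ [-1,1] the sequence β_L(t) := (κ'(1))^{-L}·(1 − κ_L(t)) is nonnegative and nonincreasing in L; consequently the limit 𝔏(t) := lim_{L→∞} (κ'(1))^{-L}·(1 − κ_L(t)) exists and lies in the interval [0, 1−t]. -/
open Filter Topology Set

/-- If `κ'(1) < 1`, for every `t ∈ [-1,1]` the sequence
`β_L(t) = (κ'(1))^{-L}(1 − κ_L(t))` is nonnegative and nonincreasing in `L`; hence its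
limit `𝔏(t)` exists and lies in `[0, 1−t]`. -/
theorem low_disorder_limit_exists
    (a : ℕ → ℝ) (κ : ℝ → ℝ)
    (ha : ∀ q, 0 ≤ a q)
    (hsum : HasSum a 1)
    (hinf : {q | a q ≠ 0}.Infinite)
    (hder : Summable fun q : ℕ => (q : ℝ) * a q)
    (hκ : ∀ t ∈ Icc (-1 : ℝ) 1, HasSum (fun q => a q * t ^ q) (κ t))
    (hmap : MapsTo κ (Icc (-1 : ℝ) 1) (Icc (-1 : ℝ) 1))
    (hk1 : (∑' q : ℕ, (q : ℝ) * a q) < 1) :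
    ∀ t ∈ Icc (-1 : ℝ) 1,
      (∀ L : ℕ, 0 ≤ (1 - κ^[L] t) / (∑' q : ℕ, (q : ℝ) * a q) ^ L) ∧
      (Antitone fun L : ℕ => (1 - κ^[L] t) / (∑' q : ℕ, (q : ℝ) * a q) ^ L) ∧
      ∃ ℓ ∈ Icc (0 : ℝ) (1 - t),
        Tendsto (fun L : ℕ => (1 - κ^[L] t) / (∑' q : ℕ, (q : ℝ) * a q) ^ L)
          atTop (𝓝 ℓ) := by
  set k : ℝ := ∑' q : ℕ, (q : ℝ) * a q with hkdef
  have hterm : ∀ q : ℕ, 0 ≤ (q : ℝ) * a q := fun q =>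
    mul_nonneg (Nat.cast_nonneg q) (ha q)
  -- k > 0
  obtain ⟨q0, hq0mem, hq0pos⟩ := hinf.exists_gt 0
  have haq0 : 0 < a q0 := lt_of_le_of_ne (ha q0) (Ne.symm hq0mem)
  have hkpos : 0 < k := by
    have h1 : (q0 : ℝ) * a q0 ≤ k := Summable.le_tsum hder q0 (fun i _ => hterm i)
    have : (0 : ℝ) < (q0 : ℝ) * a q0 := by
      have : (0 : ℝ) < (q0 : ℝ) := by exact_mod_cast hq0pos
      positivity
    linarith
  -- key inequality
  have key : ∀ s ∈ Icc (-1 : ℝ) 1, 1 - κ s ≤ k * (1 - s) := by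
    intro s hs
    have hκs := hκ s hs
    have h1 : HasSum (fun q => a q * (1 - s ^ q)) (1 - κ s) := by
      simpa [mul_sub, mul_one] using hsum.sub hκs
    have h2 : HasSum (fun q : ℕ => (q : ℝ) * a q * (1 - s)) (k * (1 - s)) :=
      hder.hasSum.mul_right (1 - s)
    refine hasSum_le (fun q => ?_) h1 h2
    have hs1 : -1 ≤ s := hs.1
    have hs2 : s ≤ 1 := hs.2
    have habs : |s| ≤ 1 := abs_le.2 ⟨hs1, hs2⟩
    have hg : (∑ i ∈ Finset.range q, s ^ i) * (1 - s) = 1 - s ^ q := by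
      linear_combination -geom_sum_mul s q
    have hb : (∑ i ∈ Finset.range q, s ^ i) ≤ (q : ℝ) := by
      calc (∑ i ∈ Finset.range q, s ^ i) ≤ ∑ i ∈ Finset.range q, (1 : ℝ) := by
            refine Finset.sum_le_sum fun i _ => ?_
            calc s ^ i ≤ |s ^ i| := le_abs_self _
              _ = |s| ^ i := abs_pow s i
              _ ≤ 1 := pow_le_one₀ (abs_nonneg s) habs
        _ = (q : ℝ) := by simp
    calc a q * (1 - s ^ q) = a q * ((∑ i ∈ Finset.range q, s ^ i) * (1 - s)) := by rw [hg]
      _ ≤ a q * ((q : ℝ) * (1 - s)) := by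
          refine mul_le_mul_of_nonneg_left ?_ (ha q)
          exact mul_le_mul_of_nonneg_right hb (by linarith)
      _ = (q : ℝ) * a q * (1 - s) := by ring
  intro t ht
  have hiter : ∀ L : ℕ, κ^[L] t ∈ Icc (-1 : ℝ) 1 := by
    intro L
    induction L with
    | zero => simpa using ht
    | succ n ih => rw [Function.iterate_succ_apply']; exact hmap ih
  have hnonneg : ∀ L : ℕ, 0 ≤ (1 - κ^[L] t) / k ^ L := by
    intro L
    have h1 : κ^[L] t ≤ 1 := (hiter L).2
    have h2 : (0 : ℝ) < k ^ L := pow_pos hkpos L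
    exact div_nonneg (by linarith) h2.le
  have hanti : Antitone fun L : ℕ => (1 - κ^[L] t) / k ^ L := by
    refine antitone_nat_of_succ_le fun L => ?_
    have hkey := key (κ^[L] t) (hiter L)
    have h2 : (0 : ℝ) < k ^ (L + 1) := pow_pos hkpos (L + 1)
    have hstep : (1 - κ^[L + 1] t) / k ^ (L + 1) ≤ k * (1 - κ^[L] t) / k ^ (L + 1) := by
      apply div_le_div_of_nonneg_right _ h2.le
      · rw [Function.iterate_succ_apply']; exact hkey
    have heq : k * (1 - κ^[L] t) / k ^ (L + 1) = (1 - κ^[L] t) / k ^ L := by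
      field_simp
      ring
    simpa [heq] using hstep
  refine ⟨hnonneg, hanti, ?_⟩
  have hbdd : BddBelow (Set.range fun L : ℕ => (1 - κ^[L] t) / k ^ L) := by
    refine ⟨0, ?_⟩
    rintro x ⟨L, rfl⟩
    exact hnonneg L
  refine ⟨⨅ L : ℕ, (1 - κ^[L] t) / k ^ L, ⟨?_, ?_⟩, tendsto_atTop_ciInf hanti hbdd⟩
  · exact le_ciInf hnonneg
  · have h0 : (1 - κ^[0] t) / k ^ 0 = 1 - t := by simp
    calc (⨅ L : ℕ, (1 - κ^[L] t) / k ^ L) ≤ (1 - κ^[0] t) / k ^ 0 := ciInf_le hbdd 0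
      _ = 1 - t := h0
end

section
/- Assume κ'(1) < 1 and Assumption A. Then for every t ∈ [-1,1], the limit 𝔏(t) := lim_{L→∞} (κ'(1))^{-L}·(1 − κ_L(t)) satisfies: 𝔏(t) = 0 if and only if κ(t) = 1 (i.e., if and only if t ∈ I(κ)). -/
/-!
If `κ t = 1`, the orbit sits at the fixed point `1` from the first step on. Otherwise it never
reaches `1`: `κ s = 1` forces `s = ±1`, the orbit can step from `-1` to `1` only if `κ (-1) = 1`,
and it can land on `-1` after a step only if `κ (-1) = -1`. So `x L = 1 - κ^[L] t > 0`.
Comparing termwise with Bernoulli's `1 - s ^ q ≤ q (1 - s)` gives `x (L + 1) ≤ m * x L` with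
`m = κ'(1) < 1`, so `x L → 0` geometrically, while Assumption A gives
`x (L + 1) ≥ m * x L * (1 - C / m * x L ^ (ρ - 1))` near `1`. As `ρ > 1`, the defects
`C / m * x L ^ (ρ - 1)` decay geometrically, so the product of the factors stays bounded below
and `x L / m ^ L` stays away from `0`.
-/

open Filter Topology Set Asymptotics

lemma eq_one_of_hasSum_mul_eq_one {ι : Type*} {a b : ι → ℝ} (ha : ∀ i, 0 ≤ a i)
    (hsum : HasSum a 1) (hb : ∀ i, b i ≤ 1) (hab : HasSum (fun i => a i * b i) 1) {i : ι}
    (hi : a i ≠ 0) : b i = 1 := by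
  have hzero : HasSum (fun i => a i * (1 - b i)) 0 := by
    simpa only [mul_sub, mul_one, sub_self] using hsum.sub hab
  have hnonneg : ∀ j, 0 ≤ a j * (1 - b j) := fun j => mul_nonneg (ha j) (sub_nonneg.2 (hb j))
  have := congrFun ((hasSum_zero_iff_of_nonneg hnonneg).1 hzero) i
  simp only [Pi.zero_apply, mul_eq_zero, hi, false_or] at this
  linarith

lemma abs_pow_le_one_of_mem_Icc {s : ℝ} (hs : s ∈ Icc (-1 : ℝ) 1) (q : ℕ) : |s ^ q| ≤ 1 :=
  (abs_pow s q).trans_le (pow_le_one₀ (abs_nonneg s) (abs_le.2 hs))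

section GeneratingFunction

variable {a : ℕ → ℝ} {κ : ℝ → ℝ}

lemma apply_one_of_hasSum (hsum : HasSum a 1)
    (hκ : ∀ t ∈ Icc (-1 : ℝ) 1, HasSum (fun q => a q * t ^ q) (κ t)) : κ 1 = 1 :=
  (hκ 1 ⟨by norm_num, le_rfl⟩).unique (by simpa using hsum)

lemma one_sub_apply_le (ha : ∀ q, 0 ≤ a q) (hsum : HasSum a 1)
    (hder : Summable fun q : ℕ => (q : ℝ) * a q)
    (hκ : ∀ t ∈ Icc (-1 : ℝ) 1, HasSum (fun q => a q * t ^ q) (κ t))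
    {s : ℝ} (hs : s ∈ Icc (-1 : ℝ) 1) :
    1 - κ s ≤ (∑' q : ℕ, (q : ℝ) * a q) * (1 - s) := by
  refine hasSum_le (fun q => ?_) (hsum.sub (hκ s hs)) (hder.hasSum.mul_right (1 - s))
  have hbernoulli : 1 + q * (s - 1) ≤ s ^ q := by
    simpa using one_add_mul_le_pow (by linarith [hs.1] : (-2 : ℝ) ≤ s - 1) q
  nlinarith [ha q]

lemma eq_one_or_eq_neg_one_of_apply_eq_one (ha : ∀ q, 0 ≤ a q) (hsum : HasSum a 1)
    (hκ : ∀ t ∈ Icc (-1 : ℝ) 1, HasSum (fun q => a q * t ^ q) (κ t))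
    {q₀ : ℕ} (hq₀ : q₀ ≠ 0) (haq₀ : a q₀ ≠ 0) {s : ℝ} (hs : s ∈ Icc (-1 : ℝ) 1)
    (h : κ s = 1) : s = 1 ∨ s = -1 := by
  have hpow : s ^ q₀ = 1 := eq_one_of_hasSum_mul_eq_one ha hsum
    (fun q => (abs_le.1 (abs_pow_le_one_of_mem_Icc hs q)).2) (h ▸ hκ s hs) haq₀
  have habs : |s| = 1 :=
    (pow_eq_one_iff_of_nonneg (abs_nonneg s) hq₀).1 (by rw [← abs_pow, hpow, abs_one])
  exact (abs_eq zero_le_one).1 habs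

lemma apply_neg_one_of_apply_eq_neg_one (ha : ∀ q, 0 ≤ a q) (hsum : HasSum a 1)
    (hκ : ∀ t ∈ Icc (-1 : ℝ) 1, HasSum (fun q => a q * t ^ q) (κ t))
    {u : ℝ} (hu : u ∈ Icc (-1 : ℝ) 1) (h : κ u = -1) : κ (-1) = -1 := by
  have hneg_pow : ∀ q, a q ≠ 0 → -u ^ q = 1 := fun q =>
    eq_one_of_hasSum_mul_eq_one ha hsum
      (fun q => neg_le.1 (abs_le.1 (abs_pow_le_one_of_mem_Icc hu q)).1)
      (by simpa only [mul_neg, h, neg_neg] using (hκ u hu).neg)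
  have hodd : ∀ q, a q * (-1) ^ q = -a q := by
    intro q
    by_cases hq : a q = 0
    · simp [hq]
    have hq_odd : Odd q := Nat.not_even_iff_odd.1 fun he => by
      linarith [he.pow_nonneg u, hneg_pow q hq]
    rw [hq_odd.neg_one_pow, mul_neg_one]
  exact (hκ (-1) ⟨le_rfl, by norm_num⟩).unique (by simpa only [hodd] using hsum.neg)

lemma iterate_lt_one (ha : ∀ q, 0 ≤ a q) (hsum : HasSum a 1)
    (hκ : ∀ t ∈ Icc (-1 : ℝ) 1, HasSum (fun q => a q * t ^ q) (κ t))
    (hmap : MapsTo κ (Icc (-1 : ℝ) 1) (Icc (-1 : ℝ) 1))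
    {q₀ : ℕ} (hq₀ : q₀ ≠ 0) (haq₀ : a q₀ ≠ 0) {t : ℝ} (ht : t ∈ Icc (-1 : ℝ) 1)
    (h1 : κ t ≠ 1) (L : ℕ) : κ^[L] t < 1 := by
  induction L with
  | zero => exact ht.2.lt_of_ne fun h => h1 (h ▸ apply_one_of_hasSum hsum hκ)
  | succ L ih =>
    rw [Function.iterate_succ_apply']
    refine (hmap (hmap.iterate L ht)).2.lt_of_ne fun h => ?_
    rcases eq_one_or_eq_neg_one_of_apply_eq_one ha hsum hκ hq₀ haq₀ (hmap.iterate L ht) h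
      with hL | hL
    · exact ih.ne hL
    cases L with
    | zero => exact h1 h
    | succ L =>
      rw [Function.iterate_succ_apply'] at hL
      have hκ_neg_one := apply_neg_one_of_apply_eq_neg_one ha hsum hκ (hmap.iterate L ht) hL
      rw [Function.iterate_succ_apply', hL, hκ_neg_one] at h
      norm_num at h

end GeneratingFunction

section Sequences

variable {x : ℕ → ℝ} {m C ρ : ℝ}

lemma mul_pow_mul_one_sub_sum_le {u ε : ℕ → ℝ} {c : ℝ} (hc : 0 ≤ c) (hu : 0 ≤ u 0)
    (hε : ∀ k, 0 ≤ ε k) (hε1 : ∀ k, ε k ≤ 1) (h : ∀ k, c * (1 - ε k) * u k ≤ u (k + 1))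
    (n : ℕ) : c ^ n * (1 - ∑ i ∈ Finset.range n, ε i) * u 0 ≤ u n := by
  induction n with
  | zero => simp
  | succ n ih =>
    have hS : 0 ≤ ∑ i ∈ Finset.range n, ε i := Finset.sum_nonneg fun i _ => hε i
    calc c ^ (n + 1) * (1 - ∑ i ∈ Finset.range (n + 1), ε i) * u 0
        ≤ c * (1 - ε n) * (c ^ n * (1 - ∑ i ∈ Finset.range n, ε i) * u 0) := by
          have hcross := mul_nonneg (mul_nonneg (pow_nonneg hc (n + 1)) hu) (mul_nonneg hS (hε n))
          rw [Finset.sum_range_succ]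
          linarith [show c * (1 - ε n) * (c ^ n * (1 - ∑ i ∈ Finset.range n, ε i) * u 0) =
            c ^ (n + 1) * (1 - (∑ i ∈ Finset.range n, ε i + ε n)) * u 0 +
              c ^ (n + 1) * u 0 * ((∑ i ∈ Finset.range n, ε i) * ε n) by ring]
      _ ≤ c * (1 - ε n) * u n :=
          mul_le_mul_of_nonneg_left ih (mul_nonneg hc (sub_nonneg.2 (hε1 n)))
      _ ≤ u (n + 1) := h n

lemma tendsto_zero_of_le_mul_self (hm0 : 0 ≤ m) (hm1 : m < 1) (hx : ∀ k, 0 ≤ x k)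
    (hupper : ∀ k, x (k + 1) ≤ m * x k) : Tendsto x atTop (𝓝 0) :=
  squeeze_zero hx (fun k => le_geom hm0 k fun j _ => hupper j)
    (by simpa using (tendsto_pow_atTop_nhds_zero_of_lt_one hm0 hm1).mul_const (x 0))

lemma half_mul_pow_le_of_rpow_small (hm0 : 0 < m) (hm1 : m < 1) (hρ : 1 < ρ) (hC : 0 ≤ C)
    (hx : ∀ k, 0 < x k) (hupper : ∀ k, x (k + 1) ≤ m * x k)
    (hlower : ∀ k, m * x k - C * x k ^ ρ ≤ x (k + 1))
    (hsmall : C / m * x 0 ^ (ρ - 1) ≤ (1 - m ^ (ρ - 1)) / 2) (k : ℕ) :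
    m ^ k * x 0 / 2 ≤ x k := by
  set r := m ^ (ρ - 1) with hr
  set B := C / m * x 0 ^ (ρ - 1) with hB
  have hr0 : 0 ≤ r := Real.rpow_nonneg hm0.le _
  have hr1 : r < 1 := Real.rpow_lt_one hm0.le hm1 (by linarith)
  have hB0 : 0 ≤ B := mul_nonneg (div_nonneg hC hm0.le) (Real.rpow_nonneg (hx 0).le _)
  have hdecay : ∀ k, x k ^ (ρ - 1) ≤ x 0 ^ (ρ - 1) * r ^ k := fun k =>
    calc x k ^ (ρ - 1) ≤ (m ^ k * x 0) ^ (ρ - 1) :=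
          Real.rpow_le_rpow (hx k).le (le_geom hm0.le k fun j _ => hupper j) (by linarith)
      _ = x 0 ^ (ρ - 1) * r ^ k := by
          rw [Real.mul_rpow (by positivity) (hx 0).le, mul_comm, hr, ← Real.rpow_natCast_mul hm0.le,
            mul_comm (k : ℝ), Real.rpow_mul hm0.le, Real.rpow_natCast]
  have hstep : ∀ k, m * (1 - B * r ^ k) * x k ≤ x (k + 1) := fun k =>
    calc m * (1 - B * r ^ k) * x k = m * x k - C * (x 0 ^ (ρ - 1) * r ^ k) * x k := by
          rw [hB]; field_simp
      _ ≤ m * x k - C * x k ^ (ρ - 1) * x k := by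
          gcongr
          · exact (hx k).le
          · exact hdecay k
      _ = m * x k - C * x k ^ ρ := by rw [mul_assoc, ← Real.rpow_add_one (hx k).ne', sub_add_cancel]
      _ ≤ x (k + 1) := hlower k
  have hsum : ∑ i ∈ Finset.range k, B * r ^ i ≤ 1 / 2 := by
    rw [← Finset.mul_sum, Finset.range_eq_Ico]
    calc B * ∑ i ∈ Finset.Ico 0 k, r ^ i ≤ B * (r ^ 0 / (1 - r)) :=
          mul_le_mul_of_nonneg_left (geom_sum_Ico_le_of_lt_one hr0 hr1) hB0
      _ ≤ 1 / 2 := by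
          rw [pow_zero, mul_one_div, div_le_iff₀ (by linarith)]
          linarith
  have hε1 : ∀ i, B * r ^ i ≤ 1 := fun i => by
    nlinarith [pow_le_one₀ hr0 hr1.le (n := i), pow_nonneg hr0 i]
  have hprod := mul_pow_mul_one_sub_sum_le hm0.le (hx 0).le (fun i => by positivity) hε1 hstep k
  nlinarith [mul_nonneg (mul_nonneg (pow_pos hm0 k).le (hx 0).le) (sub_nonneg.2 hsum)]

lemma exists_pos_eventually_le_div_pow (hm0 : 0 < m) (hm1 : m < 1) (hρ : 1 < ρ) (hC : 0 ≤ C)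
    (hx : ∀ k, 0 < x k) (hupper : ∀ k, x (k + 1) ≤ m * x k)
    (hlower : ∀ᶠ k in atTop, m * x k - C * x k ^ ρ ≤ x (k + 1)) :
    ∃ b > 0, ∀ᶠ k in atTop, b ≤ x k / m ^ k := by
  have hx0 := tendsto_zero_of_le_mul_self hm0.le hm1 (fun k => (hx k).le) hupper
  have hdefect : Tendsto (fun k => C / m * x k ^ (ρ - 1)) atTop (𝓝 0) := by
    simpa [Real.zero_rpow (by linarith : ρ - 1 ≠ 0)] using
      ((Real.continuousAt_rpow_const 0 (ρ - 1) (Or.inr (by linarith))).tendsto.comp hx0).const_mul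
        (C / m)
  have hsmall := hdefect.eventually_le_const
    (by linarith [Real.rpow_lt_one hm0.le hm1 (by linarith : 0 < ρ - 1)] :
      (0 : ℝ) < (1 - m ^ (ρ - 1)) / 2)
  obtain ⟨N, hN⟩ := eventually_atTop.1 (hlower.and hsmall)
  refine ⟨x N / m ^ N / 2, by have := hx N; positivity, eventually_atTop.2 ⟨N, fun k hk => ?_⟩⟩
  obtain ⟨j, rfl⟩ := Nat.exists_eq_add_of_le hk
  have hshift := half_mul_pow_le_of_rpow_small (x := fun j => x (N + j)) hm0 hm1 hρ hC
    (fun _ => hx _) (fun _ => hupper _) (fun j => (hN (N + j) (by omega)).1)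
    (by simpa using (hN N le_rfl).2) j
  rw [pow_add, le_div_iff₀ (by positivity)]
  have hmN := pow_pos hm0 N
  calc x N / m ^ N / 2 * (m ^ N * m ^ j) = m ^ j * x N / 2 := by field_simp
    _ ≤ x (N + j) := hshift

end Sequences

lemma eventually_sub_mul_rpow_le_of_isLittleO {f : ℝ → ℝ} {m c ρ : ℝ}
    (h : (fun t => f t - (m * (1 - t) - c * (1 - t) ^ ρ)) =o[𝓝[<] (1 : ℝ)] fun t => (1 - t) ^ ρ) :
    ∀ᶠ t in 𝓝[<] (1 : ℝ), m * (1 - t) - (|c| + 1) * (1 - t) ^ ρ ≤ f t := by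
  filter_upwards [h.bound one_pos, self_mem_nhdsWithin] with t ht ht1
  have hpos : 0 ≤ (1 - t) ^ ρ := Real.rpow_nonneg (by linarith [show t < 1 from ht1]) ρ
  rw [Real.norm_eq_abs, Real.norm_eq_abs, abs_of_nonneg hpos, one_mul] at ht
  nlinarith [(abs_le.1 ht).1, mul_le_mul_of_nonneg_right (le_abs_self c) hpos]

lemma exists_pos_eventually_le_one_sub_iterate_div_pow {a : ℕ → ℝ} {κ : ℝ → ℝ}
    (ha : ∀ q, 0 ≤ a q) (hsum : HasSum a 1) (hder : Summable fun q : ℕ => (q : ℝ) * a q)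
    (hκ : ∀ t ∈ Icc (-1 : ℝ) 1, HasSum (fun q => a q * t ^ q) (κ t))
    (hmap : MapsTo κ (Icc (-1 : ℝ) 1) (Icc (-1 : ℝ) 1))
    {q₀ : ℕ} (hq₀ : q₀ ≠ 0) (haq₀ : a q₀ ≠ 0) (hm1 : (∑' q : ℕ, (q : ℝ) * a q) < 1)
    {c ρ : ℝ} (hρ : 1 < ρ)
    (hA : (fun t : ℝ => (1 - κ t) - ((∑' q : ℕ, (q : ℝ) * a q) * (1 - t) - c * (1 - t) ^ ρ))
        =o[𝓝[<] (1 : ℝ)] fun t : ℝ => (1 - t) ^ ρ)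
    {t : ℝ} (ht : t ∈ Icc (-1 : ℝ) 1) (h1 : κ t ≠ 1) :
    ∃ b > 0, ∀ᶠ L in atTop, b ≤ (1 - κ^[L] t) / (∑' q : ℕ, (q : ℝ) * a q) ^ L := by
  set m := ∑' q : ℕ, (q : ℝ) * a q
  have hm0 : 0 < m := hder.tsum_pos (fun q => mul_nonneg q.cast_nonneg (ha q)) q₀
    (mul_pos (Nat.cast_pos.2 (Nat.pos_of_ne_zero hq₀)) ((ha q₀).lt_of_ne' haq₀))
  have hpos : ∀ L, 0 < 1 - κ^[L] t := fun L =>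
    sub_pos.2 (iterate_lt_one ha hsum hκ hmap hq₀ haq₀ ht h1 L)
  have hupper : ∀ L, 1 - κ^[L + 1] t ≤ m * (1 - κ^[L] t) := fun L => by
    rw [Function.iterate_succ_apply']
    exact one_sub_apply_le ha hsum hder hκ (hmap.iterate L ht)
  have horbit : Tendsto (fun L => κ^[L] t) atTop (𝓝[<] 1) := by
    refine tendsto_nhdsWithin_iff.2 ⟨?_, Eventually.of_forall fun L => sub_pos.1 (hpos L)⟩
    simpa using (tendsto_zero_of_le_mul_self (x := fun L => 1 - κ^[L] t) hm0.le hm1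
      (fun L => (hpos L).le) hupper).const_sub 1
  refine exists_pos_eventually_le_div_pow (x := fun L => 1 - κ^[L] t) hm0 hm1 hρ
    (by positivity : 0 ≤ |c| + 1) hpos hupper ?_
  filter_upwards [horbit.eventually (eventually_sub_mul_rpow_le_of_isLittleO hA)] with L hL
  rwa [Function.iterate_succ_apply']

/-- If `κ'(1) < 1` and Assumption A holds
(`1 − κ(t) = κ'(1)(1−t) − c(1−t)^ρ + o((1−t)^ρ)` as `t → 1⁻`, for some `c ≠ 0`, `ρ > 1`),
then the limit `𝔏(t) = lim_L (κ'(1))^{-L}(1 − κ_L(t))` vanishes iff `κ(t) = 1`. -/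
theorem low_disorder_limit_vanishes_iff
    (a : ℕ → ℝ) (κ : ℝ → ℝ)
    (ha : ∀ q, 0 ≤ a q)
    (hsum : HasSum a 1)
    (hinf : {q | a q ≠ 0}.Infinite)
    (hder : Summable fun q : ℕ => (q : ℝ) * a q)
    (hκ : ∀ t ∈ Icc (-1 : ℝ) 1, HasSum (fun q => a q * t ^ q) (κ t))
    (hmap : MapsTo κ (Icc (-1 : ℝ) 1) (Icc (-1 : ℝ) 1))
    (hk1 : (∑' q : ℕ, (q : ℝ) * a q) < 1)
    (hA : ∃ c : ℝ, c ≠ 0 ∧ ∃ ρ : ℝ, 1 < ρ ∧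
      (fun t : ℝ => (1 - κ t) - ((∑' q : ℕ, (q : ℝ) * a q) * (1 - t) - c * (1 - t) ^ ρ))
        =o[𝓝[<] (1 : ℝ)] fun t : ℝ => (1 - t) ^ ρ) :
    ∀ t ∈ Icc (-1 : ℝ) 1, ∀ ℓ : ℝ,
      Tendsto (fun L : ℕ => (1 - κ^[L] t) / (∑' q : ℕ, (q : ℝ) * a q) ^ L) atTop (𝓝 ℓ) →
      (ℓ = 0 ↔ κ t = 1) := by
  obtain ⟨c, -, ρ, hρ, hA⟩ := hA
  obtain ⟨q₀, haq₀, hq₀⟩ := hinf.exists_gt 0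
  intro t ht ℓ hℓ
  constructor
  · intro hℓ0
    by_contra h1
    obtain ⟨b, hb, hbL⟩ := exists_pos_eventually_le_one_sub_iterate_div_pow ha hsum hder hκ hmap
      hq₀.ne' haq₀ hk1 hρ hA ht h1
    exact hb.not_ge (hℓ0 ▸ ge_of_tendsto hℓ hbL)
  · intro h1
    refine tendsto_nhds_unique hℓ (tendsto_const_nhds.congr' ?_)
    filter_upwards [eventually_ge_atTop 1] with L hL
    obtain ⟨L, rfl⟩ := Nat.exists_eq_add_of_le' hL
    rw [Function.iterate_succ_apply, h1, Function.iterate_fixed (apply_one_of_hasSum hsum hκ),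
      sub_self, zero_div]
end

section
/- Assume κ'(1) = 1 and Assumption A. Then for every t ∈ [-1,1], lim_{L→∞} L^{1/(ρ−1)}·(1 − κ_L(t)) = 0 if t ∈ I(κ), and lim_{L→∞} L^{1/(ρ−1)}·(1 − κ_L(t)) = (c(ρ−1))^{−1/(ρ−1)} if t ∉ I(κ). -/
/-!
Since `κ'(1) = 1` and some `a_q` with `q ≥ 2` is nonzero, Bernoulli's inequality gives
`s < κ(s) < 1` on `(-1, 1)`, so an orbit not hitting `1` at the first step increases to the only
fixed point `1`. Along it `ε_L = 1 - κ_L(t)` satisfies `ε_{L+1} = ε_L - c ε_L^ρ + o(ε_L^ρ)`, hence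
`ε_{L+1}^{1-ρ} - ε_L^{1-ρ} → c(ρ - 1)`; by Cesàro `ε_L^{1-ρ} / L → c(ρ - 1)`, which is the claim
after raising to the power `-1/(ρ-1)`.
-/

open Filter Topology Set Asymptotics

lemma pow_le_one_of_abs_le_one {s : ℝ} (hs : |s| ≤ 1) (n : ℕ) : s ^ n ≤ 1 :=
  (le_abs_self _).trans ((abs_pow s n).trans_le (pow_le_one₀ (abs_nonneg s) hs))

lemma pow_lt_one_of_abs_lt_one {s : ℝ} (hs : |s| < 1) {n : ℕ} (hn : n ≠ 0) : s ^ n < 1 :=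
  (le_abs_self _).trans_lt ((abs_pow s n).trans_lt (pow_lt_one₀ (abs_nonneg s) hs hn))

lemma one_add_mul_sub_lt_pow {s : ℝ} (hs₁ : -1 ≤ s) (hs₂ : s < 1) {n : ℕ} (hn : 2 ≤ n) :
    1 + n * (s - 1) < s ^ n := by
  have hgeom : ∑ i ∈ Finset.range n, s ^ i < n := by
    simpa using Finset.sum_lt_sum (fun i _ => pow_le_one_of_abs_le_one (abs_le.2 ⟨hs₁, hs₂.le⟩) i)
      ⟨1, Finset.mem_range.2 (by omega), by simpa using hs₂⟩
  nlinarith [geom_sum_mul_neg s n]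

section PowerSeries

variable {a : ℕ → ℝ} {s y : ℝ}

lemma hasSum_pow_le_one (ha : ∀ q, 0 ≤ a q) (hsum : HasSum a 1) (hs : |s| ≤ 1)
    (hy : HasSum (fun q => a q * s ^ q) y) : y ≤ 1 :=
  hasSum_le (fun q => mul_le_of_le_one_right (ha q) (pow_le_one_of_abs_le_one hs q)) hy hsum

lemma hasSum_pow_lt_one (ha : ∀ q, 0 ≤ a q) (hsum : HasSum a 1) {q₀ : ℕ} (hq₀ : q₀ ≠ 0)
    (ha₀ : a q₀ ≠ 0) (hs : |s| < 1) (hy : HasSum (fun q => a q * s ^ q) y) : y < 1 :=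
  hasSum_lt (fun q => mul_le_of_le_one_right (ha q) (pow_le_one_of_abs_le_one hs.le q))
    (mul_lt_of_lt_one_right ((ha q₀).lt_of_ne' ha₀) (pow_lt_one_of_abs_lt_one hs hq₀)) hy hsum

/-- With `∑ a_q = ∑ q a_q = 1`, the gap `κ(s) - s = ∑ a_q (s^q - 1 - q (s - 1))` is a sum of
Bernoulli defects, and the one at `q₀ ≥ 2` is strictly positive. -/
lemma lt_of_hasSum_pow (ha : ∀ q, 0 ≤ a q) (hsum : HasSum a 1)
    (hd : HasSum (fun q : ℕ => (q : ℝ) * a q) 1) {q₀ : ℕ} (hq₀ : 2 ≤ q₀) (ha₀ : a q₀ ≠ 0)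
    (hs₁ : -1 ≤ s) (hs₂ : s < 1) (hy : HasSum (fun q => a q * s ^ q) y) : s < y := by
  have hlin : HasSum (fun q : ℕ => a q * (1 + q * (s - 1))) s := by
    convert hsum.add (hd.mul_right (s - 1)) using 1
    · ext q; ring
    · ring
  refine hasSum_lt (fun q => mul_le_mul_of_nonneg_left (one_add_mul_sub_le_pow hs₁ q) (ha q))
    ?_ hlin hy (i := q₀)
  exact mul_lt_mul_of_pos_left (one_add_mul_sub_lt_pow hs₁ hs₂ hq₀) ((ha q₀).lt_of_ne' ha₀)

lemma continuousOn_of_hasSum_pow {κ : ℝ → ℝ} (ha : ∀ q, 0 ≤ a q) (hsum : HasSum a 1)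
    (hκ : ∀ t ∈ Icc (-1 : ℝ) 1, HasSum (fun q => a q * t ^ q) (κ t)) :
    ContinuousOn κ (Icc (-1) 1) := by
  refine (continuousOn_tsum (f := fun q t => a q * t ^ q) (fun q => by fun_prop)
    hsum.summable fun q t ht => ?_).congr fun t ht => (hκ t ht).tsum_eq.symm
  rw [norm_mul, norm_pow, Real.norm_of_nonneg (ha q)]
  exact mul_le_of_le_one_right (ha q) (pow_le_one₀ (norm_nonneg t) (abs_le.2 ht))

end PowerSeries

section Orbit

variable {f : ℝ → ℝ} {a b t : ℝ}

lemma iterate_mem_Ico (hup : ∀ s ∈ Ico a b, s < f s) (hbelow : ∀ s ∈ Ioo a b, f s < b)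
    (ht : t ∈ Ico a b) (hft : f t < b) (n : ℕ) : f^[n] t ∈ Ico a b := by
  have hsucc : ∀ n, f^[n + 1] t ∈ Ioo a b := by
    intro n
    induction n with
    | zero => exact ⟨ht.1.trans_lt (hup t ht), hft⟩
    | succ n ih =>
      rw [Function.iterate_succ_apply']
      exact ⟨ih.1.trans (hup _ (Ioo_subset_Ico_self ih)), hbelow _ ih⟩
  cases n with
  | zero => exact ht
  | succ n => exact Ioo_subset_Ico_self (hsucc n)

/-- The orbit increases to a fixed point of `f` in `[a, b]`, and `b` is the only one. -/
lemma tendsto_iterate_nhdsLT (hf : ContinuousOn f (Icc a b)) (hup : ∀ s ∈ Ico a b, s < f s)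
    (hbelow : ∀ s ∈ Ioo a b, f s < b) (ht : t ∈ Ico a b) (hft : f t < b) :
    Tendsto (fun n => f^[n] t) atTop (𝓝[<] b) := by
  have hmem := iterate_mem_Ico hup hbelow ht hft
  have hmono : StrictMono fun n => f^[n] t := strictMono_nat_of_lt_succ fun n => by
    simpa only [Function.iterate_succ_apply'] using hup _ (hmem n)
  have hlim := tendsto_atTop_ciSup hmono.monotone ⟨b, forall_mem_range.2 fun n => (hmem n).2.le⟩
  set ℓ := ⨆ n, f^[n] t
  have hℓ : ℓ ∈ Icc a b :=
    isClosed_Icc.mem_of_tendsto hlim (Eventually.of_forall fun n => Ico_subset_Icc_self (hmem n))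
  have hfix : f ℓ = ℓ := by
    refine tendsto_nhds_unique ((hf ℓ hℓ).tendsto.comp (tendsto_nhdsWithin_iff.2
      ⟨hlim, Eventually.of_forall fun n => Ico_subset_Icc_self (hmem n)⟩)) ?_
    simpa only [Function.comp_def, ← Function.iterate_succ_apply'] using
      hlim.comp (tendsto_add_atTop_nat 1)
  have hℓb : ℓ = b := hℓ.2.eq_of_not_lt fun hlt => (hup ℓ ⟨hℓ.1, hlt⟩).ne' hfix
  exact tendsto_nhdsWithin_iff.2 ⟨hℓb ▸ hlim, Eventually.of_forall fun n => (hmem n).2⟩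

end Orbit

lemma tendsto_div_natCast_of_tendsto_succ_sub {u : ℕ → ℝ} {l : ℝ}
    (h : Tendsto (fun n => u (n + 1) - u n) atTop (𝓝 l)) :
    Tendsto (fun n => u n / n) atTop (𝓝 l) := by
  have hsum := h.cesaro.add (tendsto_const_div_atTop_nhds_zero_nat (u 0))
  rw [add_zero] at hsum
  refine hsum.congr fun n => ?_
  rw [Finset.sum_range_sub u n]
  ring

lemma tendsto_dslope_one_sub_rpow (p : ℝ) :
    Tendsto (dslope (fun y : ℝ => (1 - y) ^ p) 0) (𝓝 0) (𝓝 (-p)) := by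
  have hf : HasDerivAt (fun y : ℝ => (1 - y) ^ p) (-p) 0 := by
    simpa using ((hasDerivAt_id (0 : ℝ)).const_sub 1).rpow_const (p := p) (Or.inl (by norm_num))
  have hcont := (continuousAt_dslope_same.2 hf.differentiableAt).tendsto
  rwa [dslope_same, hf.deriv] at hcont

section Asymptotics

variable {ε : ℕ → ℝ} {c ρ : ℝ}

/-- `u_n = ε_n^{1-ρ}` linearizes the recursion `ε_{n+1} ≈ ε_n - c ε_n^ρ`: with
`ε_{n+1} = ε_n (1 - x_n)`, one has `u_{n+1} - u_n = u_n x_n · dslope ((1 - ·)^{1-ρ}) 0 x_n`,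
where `u_n x_n → c` and `x_n → 0`. -/
lemma tendsto_rpow_one_sub_succ_sub (hρ : 1 < ρ) (hpos : ∀ n, 0 < ε n)
    (hlim : Tendsto ε atTop (𝓝 0))
    (hrec : (fun n => ε (n + 1) - (ε n - c * ε n ^ ρ)) =o[atTop] fun n => ε n ^ ρ) :
    Tendsto (fun n => ε (n + 1) ^ (1 - ρ) - ε n ^ (1 - ρ)) atTop (𝓝 (c * (ρ - 1))) := by
  set w : ℕ → ℝ := fun n => (ε n - ε (n + 1)) / ε n ^ ρ
  set x : ℕ → ℝ := fun n => 1 - ε (n + 1) / ε n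
  have hpow : ∀ n, ε n ^ ρ = ε n * ε n ^ (ρ - 1) := fun n => by
    rw [← Real.rpow_one_add' (hpos n).le (by linarith), add_sub_cancel]
  have hw : Tendsto w atTop (𝓝 c) := by
    have := (tendsto_const_nhds (x := c)).sub hrec.tendsto_div_nhds_zero
    rw [sub_zero] at this
    refine this.congr fun n => ?_
    simp only [w]
    field_simp [(Real.rpow_pos_of_pos (hpos n) ρ).ne']
    ring
  have hx : ∀ n, x n = w n * ε n ^ (ρ - 1) := fun n => by
    simp only [x, w, hpow n]
    field_simp [(hpos n).ne', (Real.rpow_pos_of_pos (hpos n) (ρ - 1)).ne']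
  have hx0 : Tendsto x atTop (𝓝 0) := by
    have := hw.mul (hlim.rpow_const (p := ρ - 1) (Or.inr (by linarith)))
    rwa [Real.zero_rpow (by linarith), mul_zero, ← funext hx] at this
  have hstep : ∀ n, ε (n + 1) ^ (1 - ρ) - ε n ^ (1 - ρ) =
      dslope (fun y : ℝ => (1 - y) ^ (1 - ρ)) 0 (x n) * w n := fun n => by
    have hslope := sub_smul_dslope (fun y : ℝ => (1 - y) ^ (1 - ρ)) 0 (x n)
    have h1x : 1 - x n = ε (n + 1) / ε n := sub_sub_cancel _ _
    have hwx : w n = ε n ^ (1 - ρ) * x n := by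
      simp only [w, x, Real.rpow_sub (hpos n), Real.rpow_one]
      field_simp [(hpos n).ne']
    simp only [smul_eq_mul, sub_zero, h1x, Real.one_rpow,
      Real.div_rpow (hpos _).le (hpos n).le] at hslope
    rw [hwx, show ∀ D, D * (ε n ^ (1 - ρ) * x n) = ε n ^ (1 - ρ) * (x n * D) by intro; ring,
      hslope]
    field_simp [(Real.rpow_pos_of_pos (hpos n) (1 - ρ)).ne']
  have := ((tendsto_dslope_one_sub_rpow (1 - ρ)).comp hx0).mul hw
  rw [neg_sub, mul_comm] at this
  exact this.congr fun n => (hstep n).symm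

theorem tendsto_natCast_rpow_mul_of_isLittleO (hc : c ≠ 0) (hρ : 1 < ρ) (hpos : ∀ n, 0 < ε n)
    (hlim : Tendsto ε atTop (𝓝 0))
    (hrec : (fun n => ε (n + 1) - (ε n - c * ε n ^ ρ)) =o[atTop] fun n => ε n ^ ρ) :
    Tendsto (fun n : ℕ => (n : ℝ) ^ ((1 : ℝ) / (ρ - 1)) * ε n) atTop
      (𝓝 ((c * (ρ - 1)) ^ (-(1 : ℝ) / (ρ - 1)))) := by
  have hρ₀ : ρ - 1 ≠ 0 := (sub_pos.2 hρ).ne'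
  have hu := (tendsto_div_natCast_of_tendsto_succ_sub (u := fun n => ε n ^ (1 - ρ))
    (tendsto_rpow_one_sub_succ_sub hρ hpos hlim hrec)).rpow_const
    (p := -(1 : ℝ) / (ρ - 1)) (Or.inl (mul_ne_zero hc hρ₀))
  refine hu.congr' ((eventually_gt_atTop 0).mono fun n hn => ?_)
  have hn' : (0 : ℝ) < n := Nat.cast_pos.2 hn
  rw [Real.div_rpow (Real.rpow_nonneg (hpos n).le _) hn'.le, ← Real.rpow_mul (hpos n).le,
    show (1 - ρ) * (-(1 : ℝ) / (ρ - 1)) = 1 by field_simp; ring, Real.rpow_one,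
    neg_div, Real.rpow_neg hn'.le]
  field_simp

end Asymptotics

theorem sparse_limit_general
    (a : ℕ → ℝ) (κ : ℝ → ℝ) (c ρ : ℝ)
    (ha : ∀ q, 0 ≤ a q)
    (hsum : HasSum a 1)
    (hinf : {q | a q ≠ 0}.Infinite)
    (hder : Summable fun q : ℕ => (q : ℝ) * a q)
    (hκ : ∀ t ∈ Icc (-1 : ℝ) 1, HasSum (fun q => a q * t ^ q) (κ t))
    (hk1 : (∑' q : ℕ, (q : ℝ) * a q) = 1)
    (hc : c ≠ 0) (hρ : 1 < ρ)
    (hA : (fun t : ℝ => (1 - κ t) - ((∑' q : ℕ, (q : ℝ) * a q) * (1 - t) - c * (1 - t) ^ ρ))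
        =o[𝓝[<] (1 : ℝ)] fun t : ℝ => (1 - t) ^ ρ) :
    ∀ t ∈ Icc (-1 : ℝ) 1,
      (κ t = 1 →
        Tendsto (fun L : ℕ => (L : ℝ) ^ ((1 : ℝ) / (ρ - 1)) * (1 - κ^[L] t)) atTop (𝓝 0)) ∧
      (κ t ≠ 1 →
        Tendsto (fun L : ℕ => (L : ℝ) ^ ((1 : ℝ) / (ρ - 1)) * (1 - κ^[L] t)) atTop
          (𝓝 ((c * (ρ - 1)) ^ (-(1 : ℝ) / (ρ - 1))))) := by
  have hκ1 : κ 1 = 1 := (hsum.unique (by simpa using hκ 1 (by norm_num))).symm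
  intro t ht
  refine ⟨fun htκ => ?_, fun htκ => ?_⟩
  · refine (tendsto_add_atTop_iff_nat 1).1 (tendsto_const_nhds.congr fun L => ?_)
    rw [Function.iterate_succ_apply, htκ, Function.iterate_fixed hκ1, sub_self, mul_zero]
  obtain ⟨q₀, ha₀, hq₀⟩ := hinf.exists_gt 1
  have hup : ∀ s ∈ Ico (-1 : ℝ) 1, s < κ s := fun s hs =>
    lt_of_hasSum_pow ha hsum (hk1 ▸ hder.hasSum) hq₀ ha₀ hs.1 hs.2 (hκ s (Ico_subset_Icc_self hs))
  have hbelow : ∀ s ∈ Ioo (-1 : ℝ) 1, κ s < 1 := fun s hs =>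
    hasSum_pow_lt_one ha hsum (by omega : q₀ ≠ 0) ha₀ (abs_lt.2 hs) (hκ s (Ioo_subset_Icc_self hs))
  have ht' : t ∈ Ico (-1 : ℝ) 1 := ⟨ht.1, ht.2.lt_of_ne fun h => htκ (h ▸ hκ1)⟩
  have hκt : κ t < 1 := (hasSum_pow_le_one ha hsum (abs_le.2 ht) (hκ t ht)).lt_of_ne htκ
  have horbit := tendsto_iterate_nhdsLT (continuousOn_of_hasSum_pow ha hsum hκ) hup hbelow ht' hκt
  refine tendsto_natCast_rpow_mul_of_isLittleO hc hρ
    (fun n => sub_pos.2 (iterate_mem_Ico hup hbelow ht' hκt n).2) ?_ ?_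
  · simpa using (tendsto_const_nhds (x := (1 : ℝ))).sub (tendsto_nhds_of_tendsto_nhdsWithin horbit)
  · rw [hk1] at hA
    simpa only [Function.iterate_succ_apply', one_mul, sub_sub_cancel_left, Function.comp_def]
      using hA.comp_tendsto horbit

/-- If `κ'(1) = 1` and Assumption A holds with constants `c ≠ 0`, `ρ > 1`,
then for every `t ∈ [-1,1]`: `L^{1/(ρ−1)}(1 − κ_L(t)) → 0` if `κ(t) = 1`, and
`L^{1/(ρ−1)}(1 − κ_L(t)) → (c(ρ−1))^{−1/(ρ−1)}` if `κ(t) ≠ 1`. -/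
theorem sparse_limit
    (a : ℕ → ℝ) (κ : ℝ → ℝ) (c ρ : ℝ)
    (ha : ∀ q, 0 ≤ a q)
    (hsum : HasSum a 1)
    (hinf : {q | a q ≠ 0}.Infinite)
    (hder : Summable fun q : ℕ => (q : ℝ) * a q)
    (hκ : ∀ t ∈ Icc (-1 : ℝ) 1, HasSum (fun q => a q * t ^ q) (κ t))
    (hmap : MapsTo κ (Icc (-1 : ℝ) 1) (Icc (-1 : ℝ) 1))
    (hk1 : (∑' q : ℕ, (q : ℝ) * a q) = 1)
    (hc : c ≠ 0) (hρ : 1 < ρ)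
    (hA : (fun t : ℝ => (1 - κ t) - ((∑' q : ℕ, (q : ℝ) * a q) * (1 - t) - c * (1 - t) ^ ρ))
        =o[𝓝[<] (1 : ℝ)] fun t : ℝ => (1 - t) ^ ρ) :
    ∀ t ∈ Icc (-1 : ℝ) 1,
      (κ t = 1 →
        Tendsto (fun L : ℕ => (L : ℝ) ^ ((1 : ℝ) / (ρ - 1)) * (1 - κ^[L] t)) atTop (𝓝 0)) ∧
      (κ t ≠ 1 →
        Tendsto (fun L : ℕ => (L : ℝ) ^ ((1 : ℝ) / (ρ - 1)) * (1 - κ^[L] t)) atTop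
          (𝓝 ((c * (ρ - 1)) ^ (-(1 : ℝ) / (ρ - 1))))) :=
  sparse_limit_general a κ c ρ ha hsum hinf hder hκ hk1 hc hρ hA
end

section
/- Assume κ'(1) = 1 and Assumption A. Then there exists a constant M > 0 such that for every integer L ≥ 1 and every t ∈ [-1,1], one has 0 ≤ L^{1/(ρ−1)}·(1 − κ_L(t)) ≤ M. -/
open Filter Topology Set Asymptotics

private lemma bern_pow {t : ℝ} (ht : -1 ≤ t) (q : ℕ) : 1 - t ^ q ≤ q * (1 - t) := by
  have h := one_add_mul_le_pow (show (-2:ℝ) ≤ t - 1 by linarith) q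
  rw [add_sub_cancel] at h
  linarith

private lemma pow_sub_pow_le_lin {s t : ℝ} (h0 : 0 ≤ s) (hst : s ≤ t) (ht : t ≤ 1) :
    ∀ q : ℕ, t ^ q - s ^ q ≤ q * (t - s) := by
  intro q
  induction q with
  | zero => simp
  | succ n ih =>
    have hsn : s ^ n ≤ 1 := pow_le_one₀ h0 (le_trans hst ht)
    have htn : (0:ℝ) ≤ t ^ n := pow_nonneg (le_trans h0 hst) n
    have hpow : s ^ n ≤ t ^ n := pow_le_pow_left₀ h0 hst n
    have h : t ^ (n+1) - s ^ (n+1) = t * (t ^ n - s ^ n) + (t - s) * s ^ n := by ring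
    rw [h]
    push_cast
    nlinarith [mul_le_mul_of_nonneg_left ih (le_trans h0 hst)]

private lemma bern_rpow {x b : ℝ} (h0 : 0 ≤ x) (h1 : x < 1) (hb : 0 < b) :
    (1 + b * x) * (1 - x) ^ b ≤ 1 := by
  have he1 : (1 - x : ℝ) ≤ Real.exp (-x) := by
    have := Real.add_one_le_exp (-x); linarith
  have he2 : (1 - x) ^ b ≤ Real.exp (-x) ^ b :=
    Real.rpow_le_rpow (by linarith) he1 hb.le
  rw [← Real.exp_mul] at he2
  have he3 : 1 + b * x ≤ Real.exp (b * x) := by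
    have := Real.add_one_le_exp (b * x); linarith
  calc (1 + b * x) * (1 - x) ^ b ≤ Real.exp (b * x) * Real.exp (-x * b) := by
        apply mul_le_mul he3 he2 (Real.rpow_nonneg (by linarith) b) (Real.exp_pos _).le
    _ = 1 := by rw [← Real.exp_add]; ring_nf; simp

/-- If `κ'(1) = 1` and Assumption A holds with constants `c ≠ 0`, `ρ > 1`,
then there is `M > 0` such that `0 ≤ L^{1/(ρ−1)}(1 − κ_L(t)) ≤ M` for every `L ≥ 1` and
`t ∈ [-1,1]`. -/
theorem sparse_uniform_bound
    (a : ℕ → ℝ) (κ : ℝ → ℝ) (c ρ : ℝ)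
    (ha : ∀ q, 0 ≤ a q)
    (hsum : HasSum a 1)
    (hinf : {q | a q ≠ 0}.Infinite)
    (hder : Summable fun q : ℕ => (q : ℝ) * a q)
    (hκ : ∀ t ∈ Icc (-1 : ℝ) 1, HasSum (fun q => a q * t ^ q) (κ t))
    (hmap : MapsTo κ (Icc (-1 : ℝ) 1) (Icc (-1 : ℝ) 1))
    (hk1 : (∑' q : ℕ, (q : ℝ) * a q) = 1)
    (hc : c ≠ 0) (hρ : 1 < ρ)
    (hA : (fun t : ℝ => (1 - κ t) - ((∑' q : ℕ, (q : ℝ) * a q) * (1 - t) - c * (1 - t) ^ ρ))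
        =o[𝓝[<] (1 : ℝ)] fun t : ℝ => (1 - t) ^ ρ) :
    ∃ M : ℝ, 0 < M ∧ ∀ L : ℕ, 1 ≤ L → ∀ t ∈ Icc (-1 : ℝ) 1,
      0 ≤ (L : ℝ) ^ ((1 : ℝ) / (ρ - 1)) * (1 - κ^[L] t) ∧
      (L : ℝ) ^ ((1 : ℝ) / (ρ - 1)) * (1 - κ^[L] t) ≤ M := by
  rw [hk1] at hA
  have hdersum : HasSum (fun q : ℕ => (q : ℝ) * a q) 1 := hk1 ▸ hder.hasSum
  -- κ t ≥ t on [-1,1]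
  have hge : ∀ t ∈ Icc (-1:ℝ) 1, t ≤ κ t := by
    intro t ht
    have hS1 : HasSum (fun q => a q - a q * t ^ q) (1 - κ t) := hsum.sub (hκ t ht)
    have hS2 : HasSum (fun q : ℕ => (q : ℝ) * a q * (1 - t)) (1 * (1 - t)) :=
      hdersum.mul_right (1 - t)
    have hle := hasSum_le (fun q => by
      have := mul_le_mul_of_nonneg_left (bern_pow ht.1 q) (ha q)
      ring_nf at this ⊢
      linarith) hS1 hS2
    linarith
  -- κ monotone on [0,1]
  have hmono : ∀ s t : ℝ, 0 ≤ s → s ≤ t → t ≤ 1 → κ s ≤ κ t := by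
    intro s t h0 hst ht1
    exact hasSum_le (fun q => mul_le_mul_of_nonneg_left (pow_le_pow_left₀ h0 hst q) (ha q))
      (hκ s ⟨by linarith, by linarith⟩) (hκ t ⟨by linarith, ht1⟩)
  -- κ is 1-Lipschitz (from above) on [0,1]
  have hlip : ∀ s t : ℝ, 0 ≤ s → s ≤ t → t ≤ 1 → κ t - κ s ≤ t - s := by
    intro s t h0 hst ht1
    have hS1 : HasSum (fun q => a q * t ^ q - a q * s ^ q) (κ t - κ s) :=
      (hκ t ⟨by linarith, ht1⟩).sub (hκ s ⟨by linarith, by linarith⟩)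
    have hS2 : HasSum (fun q : ℕ => (q : ℝ) * a q * (t - s)) (1 * (t - s)) :=
      hdersum.mul_right (t - s)
    have := hasSum_le (fun q => by
      have h := mul_le_mul_of_nonneg_left (pow_sub_pow_le_lin h0 hst ht1 q) (ha q)
      ring_nf at h ⊢
      linarith) hS1 hS2
    linarith
  have ha0le : a 0 ≤ 1 := le_hasSum hsum 0 (fun q _ => ha q)
  obtain ⟨q₀, hq₀2, hq₀⟩ : ∃ q, 2 ≤ q ∧ a q ≠ 0 := by
    obtain ⟨q, hq, hq2⟩ := hinf.exists_gt 1
    exact ⟨q, hq2, hq⟩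
  have ha0 : 0 < a 0 := by
    have hf : HasSum (fun q : ℕ => (q : ℝ) * a q - a q) 0 := by
      have := hdersum.sub hsum; simpa using this
    have hshift : HasSum (fun q : ℕ => ((q+1 : ℕ) : ℝ) * a (q+1) - a (q+1)) (a 0) := by
      rw [hasSum_nat_add_iff (f := fun q : ℕ => (q : ℝ) * a q - a q) 1]
      simpa using hf
    have hterm : ∀ q : ℕ, (0:ℝ) ≤ ((q+1 : ℕ) : ℝ) * a (q+1) - a (q+1) := by
      intro q
      have : (1:ℝ) ≤ ((q+1 : ℕ) : ℝ) := by
        exact_mod_cast Nat.one_le_iff_ne_zero.2 (Nat.succ_ne_zero q)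
      nlinarith [ha (q+1)]
    have hsingle : ((q₀ : ℝ)) * a q₀ - a q₀ ≤ a 0 := by
      have := le_hasSum hshift (q₀ - 1) (fun q _ => hterm q)
      have he : q₀ - 1 + 1 = q₀ := by omega
      rwa [he] at this
    have hq0pos : 0 < a q₀ := (ha q₀).lt_of_ne (Ne.symm hq₀)
    have : (2:ℝ) ≤ (q₀:ℝ) := by exact_mod_cast hq₀2
    nlinarith
  -- κ s ≥ a 0 + (1 - a 0) * s  on [-1,0]
  have hneg : ∀ s : ℝ, -1 ≤ s → s ≤ 0 → a 0 + (1 - a 0) * s ≤ κ s := by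
    intro s h1 h0
    have hupd : HasSum (Function.update (fun q : ℕ => a q * s) 0 (a 0))
        (a 0 - a 0 * s + 1 * s) := (hsum.mul_right s).update 0 (a 0)
    have hle : ∀ q : ℕ, Function.update (fun q : ℕ => a q * s) 0 (a 0) q ≤ a q * s ^ q := by
      intro q
      rcases Nat.eq_zero_or_pos q with rfl | hq
      · simp [Function.update]
      · rw [Function.update_of_ne (by omega)]
        apply mul_le_mul_of_nonneg_left _ (ha q)
        have habs : |s ^ q| ≤ |s| := by
          rw [abs_pow]
          calc |s| ^ q ≤ |s| ^ 1 :=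
            pow_le_pow_of_le_one (abs_nonneg s) (abs_le.2 ⟨h1, by linarith⟩) hq
          _ = |s| := pow_one _
        have := neg_abs_le (s ^ q)
        have hs : |s| = -s := abs_of_nonpos h0
        linarith [abs_le.1 habs]
    have := hasSum_le hle hupd (hκ s ⟨h1, by linarith⟩)
    linarith
  -- κ s ≥ a 0 on [0,1]
  have hpos0 : ∀ s : ℝ, 0 ≤ s → s ≤ 1 → a 0 ≤ κ s := by
    intro s h0 h1
    have := le_hasSum (hκ s ⟨by linarith, h1⟩) 0
      (fun q _ => mul_nonneg (ha q) (pow_nonneg h0 q))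
    simpa using this
  -- κ s < 1 for s ∈ [0,1)
  have hlt1 : ∀ s : ℝ, 0 ≤ s → s < 1 → κ s < 1 := by
    intro s h0 h1
    refine hasSum_lt (i := q₀) (fun q => ?_) ?_ (hκ s ⟨by linarith, h1.le⟩) hsum
    · calc a q * s ^ q ≤ a q * 1 := mul_le_mul_of_nonneg_left (pow_le_one₀ h0 h1.le) (ha q)
      _ = a q := mul_one _
    · have : s ^ q₀ < 1 := pow_lt_one₀ h0 h1 (by omega)
      have hq := (ha q₀).lt_of_ne (Ne.symm hq₀)
      nlinarith
  -- κ s > s for s ∈ [0,1)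
  have hgt : ∀ s : ℝ, 0 ≤ s → s < 1 → s < κ s := by
    intro s h0 h1
    have hS1 : HasSum (fun q => a q - a q * s ^ q) (1 - κ s) :=
      hsum.sub (hκ s ⟨by linarith, h1.le⟩)
    have hS2 : HasSum (fun q : ℕ => (q : ℝ) * a q * (1 - s)) (1 * (1 - s)) :=
      hdersum.mul_right (1 - s)
    have hq := (ha q₀).lt_of_ne (Ne.symm hq₀)
    have hlt := hasSum_lt (i := q₀) (fun q => by
        have := mul_le_mul_of_nonneg_left (bern_pow (by linarith : (-1:ℝ) ≤ s) q) (ha q)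
        ring_nf at this ⊢
        linarith) ?_ hS1 hS2
    · linarith
    · have hb : 1 - s ^ q₀ < q₀ * (1 - s) := by
        obtain ⟨r, rfl⟩ : ∃ r, q₀ = r + 1 := ⟨q₀ - 1, by omega⟩
        have hb2 := bern_pow (by linarith : (-1:ℝ) ≤ s) r
        have hr1 : (1:ℝ) ≤ r := by exact_mod_cast (by omega : 1 ≤ r)
        push_cast
        have h2 : s * (1 - s ^ r) ≤ s * ((r:ℝ) * (1 - s)) := mul_le_mul_of_nonneg_left hb2 h0
        have h3 : s * ((r:ℝ) * (1 - s)) < 1 * ((r:ℝ) * (1 - s)) :=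
          mul_lt_mul_of_pos_right h1 (mul_pos (by linarith) (by linarith))
        have h4 : s ^ (r + 1) = s * s ^ r := by ring
        nlinarith
      have := mul_lt_mul_of_pos_left hb hq
      ring_nf at this ⊢
      linarith
  have hiter : ∀ (m : ℕ), ∀ t ∈ Icc (-1:ℝ) 1, κ^[m] t ∈ Icc (-1:ℝ) 1 :=
    fun m t ht => hmap.iterate m ht
  -- entry time: after N steps every orbit is nonnegative
  have hentry : ∀ (m : ℕ), ∀ t ∈ Icc (-1:ℝ) 1,
      min 0 (1 - 2 * (1 - a 0) ^ m) ≤ κ^[m] t := by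
    intro m
    induction m with
    | zero =>
      intro t ht
      simp only [Function.iterate_zero_apply, pow_zero]
      have h : min (0:ℝ) (1 - 2 * 1) ≤ -1 := by norm_num
      linarith [ht.1]
    | succ n ih =>
      intro t ht
      have hsin := hiter n t ht
      set w := κ^[n] t with hw
      have hstep : κ^[n+1] t = κ w := by
        rw [Function.iterate_succ_apply' κ n t]
      rw [hstep]
      have hrec : 1 - 2 * (1 - a 0) ^ (n+1) = a 0 + (1 - a 0) * (1 - 2 * (1 - a 0) ^ n) := by ring
      rcases le_or_gt w 0 with h | h
      · have h1 := hneg w hsin.1 h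
        have h2 : min 0 (1 - 2 * (1 - a 0) ^ n) ≤ w := ih t ht
        have h3 : (1 - a 0) * min 0 (1 - 2 * (1 - a 0) ^ n) ≤ (1 - a 0) * w :=
          mul_le_mul_of_nonneg_left h2 (by linarith)
        rcases min_cases (0:ℝ) (1 - 2 * (1 - a 0) ^ n) with ⟨he, hle⟩ | ⟨he, hle⟩
        · rw [he] at h3
          have : min 0 (1 - 2 * (1 - a 0) ^ (n+1)) ≤ 0 := min_le_left _ _
          linarith
        · rw [he] at h3
          have : min 0 (1 - 2 * (1 - a 0) ^ (n+1)) ≤ 1 - 2 * (1 - a 0) ^ (n+1) := min_le_right _ _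
          linarith
      · have h1 := hpos0 w h.le hsin.2
        have : min 0 (1 - 2 * (1 - a 0) ^ (n+1)) ≤ 0 := min_le_left _ _
        linarith
  obtain ⟨N, hNpow⟩ : ∃ N : ℕ, 2 * (1 - a 0) ^ N ≤ 1 := by
    rcases le_or_gt (1 - a 0) 0 with h | h
    · exact ⟨1, by nlinarith⟩
    · obtain ⟨N, hN⟩ := exists_pow_lt_of_lt_one (show (0:ℝ) < 1/2 by norm_num)
        (by linarith : 1 - a 0 < 1)
      exact ⟨N, by linarith⟩
  have hN : ∀ t ∈ Icc (-1:ℝ) 1, 0 ≤ κ^[N] t := by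
    intro t ht
    have h := hentry N t ht
    have h2 : (0:ℝ) ≤ 1 - 2 * (1 - a 0) ^ N := by linarith
    calc (0:ℝ) = min 0 (1 - 2 * (1 - a 0) ^ N) := (min_eq_left h2).symm
    _ ≤ κ^[N] t := h
  -- the orbit of 0
  set s : ℕ → ℝ := fun m => κ^[m] (0:ℝ) with hsdef
  have hsP : ∀ m, 0 ≤ s m ∧ s m < 1 := by
    intro m
    induction m with
    | zero => simp [hsdef]
    | succ n ih =>
      have h1 : s (n+1) = κ (s n) := Function.iterate_succ_apply' κ n 0
      constructor
      · rw [h1]; exact le_trans ih.1 (hge _ ⟨by linarith [ih.1], ih.2.le⟩)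
      · rw [h1]; exact hlt1 _ ih.1 ih.2
  have hsmono : Monotone s := by
    apply monotone_nat_of_le_succ
    intro n
    have h1 : s (n+1) = κ (s n) := Function.iterate_succ_apply' κ n 0
    rw [h1]
    exact hge _ ⟨by linarith [(hsP n).1], (hsP n).2.le⟩
  have hbdd : BddAbove (range s) := ⟨1, fun x ⟨m, hm⟩ => hm ▸ (hsP m).2.le⟩
  have hSup : (⨆ m, s m) = 1 := by
    set S := ⨆ m, s m with hS
    have hS1 : S ≤ 1 := ciSup_le fun m => (hsP m).2.le
    have hS0 : 0 ≤ S := le_trans (hsP 0).1 (le_ciSup hbdd 0)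
    by_contra hne
    have hSlt : S < 1 := lt_of_le_of_ne hS1 hne
    have hδ : S < κ S := hgt S hS0 hSlt
    have hall : ∀ m, s m ≤ S - (κ S - S) := by
      intro m
      have h1 := hlip (s m) S (hsP m).1 (le_ciSup hbdd m) hS1
      have h2 : κ (s m) = s (m+1) := (Function.iterate_succ_apply' κ m 0).symm
      have h3 : s (m+1) ≤ S := le_ciSup hbdd (m+1)
      linarith
    have := ciSup_le hall
    rw [← hS] at this
    linarith
  have htend : Tendsto s atTop (𝓝 1) := hSup ▸ tendsto_atTop_ciSup hsmono hbdd
  have htend' : Tendsto s atTop (𝓝[<] (1:ℝ)) :=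
    tendsto_nhdsWithin_of_tendsto_nhds_of_eventually_within s htend
      (Eventually.of_forall fun m => (hsP m).2)
  -- c > 0
  have hcpos : 0 < c := by
    rcases hc.lt_or_gt with hcneg | hpos
    · exfalso
      have hev := htend'.eventually (hA.def (show (0:ℝ) < -c/2 by linarith))
      obtain ⟨m, hm⟩ := hev.exists
      set t := s m with ht
      have ht1 : t < 1 := (hsP m).2
      have ht0 : 0 ≤ t := (hsP m).1
      have hyp : (0:ℝ) < (1 - t) ^ ρ := Real.rpow_pos_of_pos (by linarith) ρ
      have hκt : κ t ≤ 1 := (hmap ⟨by linarith, ht1.le⟩).2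
      have hκget : t ≤ κ t := hge t ⟨by linarith, ht1.le⟩
      rw [Real.norm_eq_abs, Real.norm_eq_abs, abs_of_pos hyp, abs_le] at hm
      nlinarith [hm.1]
    · exact hpos
  -- eventual contraction
  obtain ⟨m₀, hm₀⟩ : ∃ m₀ : ℕ, ∀ m ≥ m₀,
      1 - s (m+1) ≤ (1 - s m) - (c/2) * (1 - s m) ^ ρ := by
    have hev := htend'.eventually (hA.def (half_pos hcpos))
    obtain ⟨m₀, hm₀⟩ := eventually_atTop.1 hev
    refine ⟨m₀, fun m hm => ?_⟩
    have h := hm₀ m hm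
    have ht1 : s m < 1 := (hsP m).2
    have hyp : (0:ℝ) < (1 - s m) ^ ρ := Real.rpow_pos_of_pos (by linarith) ρ
    rw [Real.norm_eq_abs, Real.norm_eq_abs, abs_of_pos hyp, abs_le] at h
    have hsucc : s (m+1) = κ (s m) := Function.iterate_succ_apply' κ m 0
    rw [hsucc]
    nlinarith [h.2]
  set β := ρ - 1 with hβ
  have hβpos : 0 < β := by rw [hβ]; linarith
  set γ := c/2 with hγ
  have hγpos : 0 < γ := half_pos hcpos
  set u : ℕ → ℝ := fun m => 1 - s m with hu
  have hupos : ∀ m, 0 < u m := fun m => by simp only [hu]; linarith [(hsP m).2]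
  have hkey : ∀ k : ℕ, (k : ℝ) * (β * γ) ≤ u (m₀ + k) ^ (-β) := by
    intro k
    induction k with
    | zero => simpa using (Real.rpow_pos_of_pos (hupos m₀) (-β)).le
    | succ k ih =>
      set v := u (m₀ + k) with hv
      set v' := u (m₀ + k + 1) with hv'
      have hvpos : 0 < v := hupos _
      have hv'pos : 0 < v' := hupos _
      set x := γ * v ^ β with hx
      have hxnn : 0 ≤ x := mul_nonneg hγpos.le (Real.rpow_nonneg hvpos.le β)
      have hvρ : v ^ ρ = v * v ^ β := by
        rw [show ρ = 1 + β by rw [hβ]; ring, Real.rpow_add hvpos, Real.rpow_one]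
      have hle : v' ≤ v * (1 - x) := by
        have h := hm₀ (m₀ + k) (Nat.le_add_right _ _)
        have he : v' = 1 - s (m₀ + k + 1) := by rw [hv', hu]
        rw [he]
        calc 1 - s (m₀ + k + 1) ≤ (1 - s (m₀+k)) - γ * (1 - s (m₀+k)) ^ ρ := h
        _ = v - γ * v ^ ρ := by rw [hv, hu]
        _ = v * (1 - x) := by rw [hvρ, hx]; ring
      have hx1 : x < 1 := by nlinarith
      have h1 : (v * (1 - x)) ^ (-β) ≤ v' ^ (-β) :=
        Real.rpow_le_rpow_of_nonpos hv'pos hle (neg_nonpos.2 hβpos.le)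
      have h2 : (v * (1 - x)) ^ (-β) = v ^ (-β) * (1 - x) ^ (-β) :=
        Real.mul_rpow hvpos.le (by linarith)
      have h3 : 1 + β * x ≤ (1 - x) ^ (-β) := by
        have hb := bern_rpow hxnn hx1 hβpos
        have hp : (0:ℝ) < (1 - x) ^ β := Real.rpow_pos_of_pos (by linarith) β
        rw [Real.rpow_neg (by linarith : (0:ℝ) ≤ 1 - x),
          show ((1-x)^β)⁻¹ = 1/((1-x)^β) by ring, le_div_iff₀ hp]
        linarith
      have hvv : v ^ (-β) * v ^ β = 1 := by
        rw [← Real.rpow_add hvpos]; simp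
      have h4 : v ^ (-β) * (1 + β * x) = v ^ (-β) + β * γ := by
        calc v ^ (-β) * (1 + β * x) = v ^ (-β) + β * γ * (v ^ (-β) * v ^ β) := by rw [hx]; ring
        _ = v ^ (-β) + β * γ := by rw [hvv]; ring
      have h5 : v ^ (-β) + β * γ ≤ v' ^ (-β) := by
        have h6 := mul_le_mul_of_nonneg_left h3 (Real.rpow_nonneg hvpos.le (-β))
        rw [h4] at h6; rw [h2] at h1; linarith
      have h7 : ((k:ℝ) + 1) * (β * γ) ≤ v' ^ (-β) := by linarith
      calc ((k+1 : ℕ):ℝ) * (β*γ) = ((k:ℝ)+1) * (β*γ) := by push_cast; ring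
      _ ≤ v' ^ (-β) := h7
      _ = u (m₀ + (k+1)) ^ (-β) := by rw [hv', Nat.add_assoc]
  have hub : ∀ k : ℕ, 1 ≤ k → u (m₀ + k) ≤ ((k:ℝ) * (β * γ)) ^ (-(1/β)) := by
    intro k hk
    have hkpos : (0:ℝ) < (k:ℝ) := by exact_mod_cast hk
    have hApos : (0:ℝ) < (k:ℝ) * (β * γ) := by positivity
    have h1 := Real.rpow_le_rpow_of_nonpos hApos (hkey k)
      (neg_nonpos.2 (by positivity : (0:ℝ) ≤ 1/β))
    have heq : (u (m₀+k) ^ (-β)) ^ (-(1/β)) = u (m₀+k) := by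
      rw [← Real.rpow_mul (hupos _).le, show (-β)*(-(1/β)) = 1 by field_simp, Real.rpow_one]
    rw [heq] at h1
    exact h1
  -- comparison with the orbit of 0
  have hcomp : ∀ (m : ℕ), ∀ t ∈ Icc (-1:ℝ) 1, s m ≤ κ^[N + m] t := by
    intro m
    induction m with
    | zero =>
      intro t ht
      have : s 0 = 0 := by simp [hsdef]
      rw [this]
      simpa using hN t ht
    | succ n ih =>
      intro t ht
      have h1 : s (n+1) = κ (s n) := Function.iterate_succ_apply' κ n 0
      have h2 : κ^[N + (n+1)] t = κ (κ^[N + n] t) := by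
        rw [show N + (n+1) = (N + n) + 1 by omega, Function.iterate_succ_apply' κ (N+n) t]
      rw [h1, h2]
      exact hmono (s n) (κ^[N+n] t) (hsP n).1 (ih t ht) (hiter (N+n) t ht).2
  -- final assembly
  set K : ℕ := 2 * (N + m₀ + 1) with hK
  refine ⟨max (2 * (K:ℝ) ^ ((1:ℝ)/β)) ((β * γ / 2) ^ (-(1/β))) + 1, ?_, ?_⟩
  · have h0 : (0:ℝ) ≤ 2 * (K:ℝ) ^ ((1:ℝ)/β) := by positivity
    have := le_max_left (2 * (K:ℝ) ^ ((1:ℝ)/β)) ((β * γ / 2) ^ (-(1/β)))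
    linarith
  intro L hL t ht
  have hub2 : 1 - κ^[L] t ≤ 2 := by linarith [(hiter L t ht).1]
  have hlb : 0 ≤ 1 - κ^[L] t := by linarith [(hiter L t ht).2]
  have hLpos : (0:ℝ) < (L:ℝ) := by exact_mod_cast hL
  have hLnn : (0:ℝ) ≤ (L:ℝ) ^ ((1:ℝ)/β) := Real.rpow_nonneg hLpos.le _
  constructor
  · exact mul_nonneg hLnn hlb
  rcases le_or_gt L K with hcase | hcase
  · -- small L
    have h1 : (L:ℝ) ^ ((1:ℝ)/β) ≤ (K:ℝ) ^ ((1:ℝ)/β) :=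
      Real.rpow_le_rpow hLpos.le (by exact_mod_cast hcase) (by positivity)
    have h2 : (L:ℝ) ^ ((1:ℝ)/β) * (1 - κ^[L] t) ≤ (K:ℝ) ^ ((1:ℝ)/β) * 2 := by
      apply mul_le_mul h1 hub2 hlb (by positivity)
    have h3 := le_max_left (2 * (K:ℝ) ^ ((1:ℝ)/β)) ((β * γ / 2) ^ (-(1/β)))
    linarith
  · -- large L
    set k := L - N - m₀ with hkdef
    have hk1 : 1 ≤ k := by omega
    have hLdecomp : L = N + (m₀ + k) := by omega
    have h1 : 1 - κ^[L] t ≤ u (m₀ + k) := by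
      have := hcomp (m₀ + k) t ht
      rw [← hLdecomp] at this
      simp only [hu]
      linarith
    have h2 := hub k hk1
    have h3 : (L:ℝ)/2 ≤ (k:ℝ) := by
      have : L ≤ 2 * k := by omega
      have h4 : (L:ℝ) ≤ 2 * (k:ℝ) := by exact_mod_cast this
      linarith
    have hhalfpos : (0:ℝ) < (L:ℝ)/2 * (β * γ) := by positivity
    have h4 : ((k:ℝ) * (β * γ)) ^ (-(1/β)) ≤ ((L:ℝ)/2 * (β * γ)) ^ (-(1/β)) :=
      Real.rpow_le_rpow_of_nonpos hhalfpos
        (mul_le_mul_of_nonneg_right h3 (by positivity))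
        (neg_nonpos.2 (by positivity))
    have h5 : ((L:ℝ)/2 * (β * γ)) ^ (-(1/β))
        = (L:ℝ) ^ (-(1/β)) * (β * γ / 2) ^ (-(1/β)) := by
      rw [show (L:ℝ)/2 * (β * γ) = (L:ℝ) * (β * γ / 2) by ring,
        Real.mul_rpow hLpos.le (by positivity)]
    have h6 : 1 - κ^[L] t ≤ (L:ℝ) ^ (-(1/β)) * (β * γ / 2) ^ (-(1/β)) := by
      rw [← h5]
      exact le_trans h1 (le_trans h2 h4)
    have h7 : (L:ℝ) ^ ((1:ℝ)/β) * (1 - κ^[L] t)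
        ≤ (L:ℝ) ^ ((1:ℝ)/β) * ((L:ℝ) ^ (-(1/β)) * (β * γ / 2) ^ (-(1/β))) :=
      mul_le_mul_of_nonneg_left h6 hLnn
    have h8 : (L:ℝ) ^ ((1:ℝ)/β) * (L:ℝ) ^ (-(1/β)) = 1 := by
      rw [← Real.rpow_add hLpos]
      simp
    have h9 : (L:ℝ) ^ ((1:ℝ)/β) * ((L:ℝ) ^ (-(1/β)) * (β * γ / 2) ^ (-(1/β)))
        = (β * γ / 2) ^ (-(1/β)) := by
      rw [← mul_assoc, h8, one_mul]
    rw [h9] at h7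
    have h10 := le_max_right (2 * (K:ℝ) ^ ((1:ℝ)/β)) ((β * γ / 2) ^ (-(1/β)))
    linarith
end

section
/- Let γ > 0 with γ ≠ 1, and define κ_γ : [-1,1] → ℝ by κ_γ(t) = √(γ/(γ + 1 − t²)). Then κ_γ maps [-1,1] into [-1,1], and for every integer L ≥ 1 and every t ∈ [-1,1], the L-fold iterate satisfies κ_{γ,L}(t) = √( (γ^{L+1} − γ − (γ^L − γ)t²) / (γ^{L+1} − 1 − (γ^L − 1)t²) ). -/
open Filter Topology Set

private lemma gk_sign (γ : ℝ) (hγ : 0 < γ) (hγ1 : γ ≠ 1) (t : ℝ) (ht : t ^ 2 ≤ 1) (L : ℕ) :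
    0 < (γ - 1) * (γ ^ (L + 1) - 1 - (γ ^ L - 1) * t ^ 2) := by
  have ha : (γ - 1) ≠ 0 := sub_ne_zero.mpr hγ1
  have h1 : 0 ≤ (γ - 1) * (γ ^ L - 1) := by
    rcases le_total 1 γ with h | h
    · have : (1:ℝ) ≤ γ ^ L := one_le_pow₀ h
      nlinarith
    · have : γ ^ L ≤ 1 := pow_le_one₀ hγ.le h
      nlinarith
  have hL : 0 < γ ^ L := pow_pos hγ L
  have ha2 : 0 < (γ - 1) ^ 2 := lt_of_le_of_ne (sq_nonneg _) (Ne.symm (pow_ne_zero 2 ha))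
  rw [pow_succ]
  nlinarith [mul_nonneg h1 (by linarith : (0:ℝ) ≤ 1 - t ^ 2), mul_pos hL ha2]

/-- For `γ > 0`, `γ ≠ 1`, the kernel `κ_γ(t) = √(γ/(γ+1−t²))` maps
`[-1,1]` into `[-1,1]` and its `L`-fold iterate is
`κ_{γ,L}(t) = √((γ^{L+1} − γ − (γ^L − γ)t²)/(γ^{L+1} − 1 − (γ^L − 1)t²))`. -/
theorem gaussian_kernel_iterate_formula
    (γ : ℝ) (hγ : 0 < γ) (hγ1 : γ ≠ 1) :
    MapsTo (fun t : ℝ => Real.sqrt (γ / (γ + 1 - t ^ 2))) (Icc (-1 : ℝ) 1) (Icc (-1 : ℝ) 1) ∧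
    ∀ L : ℕ, 1 ≤ L → ∀ t ∈ Icc (-1 : ℝ) 1,
      (fun t : ℝ => Real.sqrt (γ / (γ + 1 - t ^ 2)))^[L] t =
        Real.sqrt ((γ ^ (L + 1) - γ - (γ ^ L - γ) * t ^ 2) /
          (γ ^ (L + 1) - 1 - (γ ^ L - 1) * t ^ 2)) := by
  have ha : (γ - 1) ≠ 0 := sub_ne_zero.mpr hγ1
  constructor
  · intro t ht
    simp only [mem_Icc] at ht ⊢
    have ht2 : t ^ 2 ≤ 1 := by nlinarith [ht.1, ht.2]
    have hden : 0 < γ + 1 - t ^ 2 := by linarith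
    refine ⟨by linarith [Real.sqrt_nonneg (γ / (γ + 1 - t ^ 2))], ?_⟩
    rw [Real.sqrt_le_one, div_le_one hden]; linarith
  · intro L hL t ht
    simp only [mem_Icc] at ht
    have ht2 : t ^ 2 ≤ 1 := by nlinarith [ht.1, ht.2]
    have hden : 0 < γ + 1 - t ^ 2 := by linarith
    set D : ℕ → ℝ := fun ℓ => γ ^ (ℓ + 1) - 1 - (γ ^ ℓ - 1) * t ^ 2 with hD
    have hsign : ∀ ℓ, 0 < (γ - 1) * D ℓ := fun ℓ => gk_sign γ hγ hγ1 t ht2 ℓ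
    have hDne : ∀ ℓ, D ℓ ≠ 0 := fun ℓ => right_ne_zero_of_mul (ne_of_gt (hsign ℓ))
    have hprod : ∀ ℓ, 0 < D ℓ * D (ℓ + 1) := by
      intro ℓ
      have ha2 : 0 < (γ - 1) ^ 2 := lt_of_le_of_ne (sq_nonneg _) (Ne.symm (pow_ne_zero 2 ha))
      nlinarith [mul_pos (hsign ℓ) (hsign (ℓ + 1))]
    have key : ∀ K : ℕ, (fun t : ℝ => Real.sqrt (γ / (γ + 1 - t ^ 2)))^[K + 1] t =
        Real.sqrt (γ * D K / D (K + 1)) := by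
      intro K
      induction K with
      | zero =>
        simp only [zero_add, Function.iterate_one]
        congr 1
        have hD1 : D 1 = (γ - 1) * (γ + 1 - t ^ 2) := by simp only [hD]; ring
        have hD0 : D 0 = γ - 1 := by simp only [hD]; ring
        rw [hD1, hD0]
        field_simp [ha, hden.ne']
      | succ K ih =>
        rw [Function.iterate_succ_apply', ih]
        have hr : 0 < γ * D K / D (K + 1) := by
          rcases mul_pos_iff.mp (hprod K) with ⟨h1, h2⟩ | ⟨h1, h2⟩
          · exact div_pos (mul_pos hγ h1) h2
          · exact div_pos_of_neg_of_neg (by nlinarith) h2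
        show Real.sqrt (γ / (γ + 1 - Real.sqrt (γ * D K / D (K + 1)) ^ 2)) =
          Real.sqrt (γ * D (K + 1) / D (K + 1 + 1))
        rw [Real.sq_sqrt hr.le]
        have h2 : γ + 1 - γ * D K / D (K + 1) = D (K + 2) / D (K + 1) := by
          field_simp [hDne (K + 1)]
          simp only [hD]
          ring
        rw [h2, div_div_eq_mul_div]
    obtain ⟨K, rfl⟩ := Nat.exists_eq_add_of_le hL
    rw [show 1 + K = K + 1 from add_comm 1 K, key K]
    congr 1
    simp only [hD]
    rw [div_eq_div_iff (hDne (K + 1)) (by simpa [hD] using hDne (K + 1))]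
    simp only [hD]
    ring
end

section
/- Let γ > 1 and define κ_γ : [-1,1] → ℝ by κ_γ(t) = √(γ/(γ + 1 − t²)), with L-fold iterate κ_{γ,L}. Then for every t ∈ [-1,1], lim_{L→∞} γ^L·(1 − κ_{γ,L}(t)) = (γ − 1)(1 − t²) / (2(γ − t²)). -/
open Filter Topology Set

/-- For `γ > 1` and the kernel `κ_γ(t) = √(γ/(γ+1−t²))`, for every
`t ∈ [-1,1]` one has `γ^L (1 − κ_{γ,L}(t)) → (γ−1)(1−t²)/(2(γ−t²))` as `L → ∞`. -/
theorem gaussian_kernel_low_disorder_limit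
    (γ : ℝ) (hγ : 1 < γ) :
    ∀ t ∈ Icc (-1 : ℝ) 1,
      Tendsto
        (fun L : ℕ => γ ^ L * (1 - (fun t : ℝ => Real.sqrt (γ / (γ + 1 - t ^ 2)))^[L] t))
        atTop
        (𝓝 ((γ - 1) * (1 - t ^ 2) / (2 * (γ - t ^ 2)))) := by
  intro t ht
  obtain ⟨ht1, ht2⟩ := ht
  have hγ0 : (0:ℝ) < γ := by linarith
  have ht2' : t ^ 2 ≤ 1 := by nlinarith
  have ht2n : (0:ℝ) ≤ 1 - t ^ 2 := by linarith
  have hγt : (0:ℝ) < γ - t ^ 2 := by linarith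
  set κ : ℝ → ℝ := fun s => Real.sqrt (γ / (γ + 1 - s ^ 2)) with hκ
  -- one-step lemma
  have hstep : ∀ s : ℝ, s ^ 2 ≤ 1 →
      0 ≤ κ s ∧ κ s ≤ 1 ∧
      (1 - (κ s) ^ 2) * (γ * (γ - s ^ 2)) = (1 - s ^ 2) * (γ - (κ s) ^ 2) := by
    intro s hs
    have hA : (0:ℝ) < γ + 1 - s ^ 2 := by linarith
    have hk2 : (κ s) ^ 2 = γ / (γ + 1 - s ^ 2) := by
      rw [hκ]; exact Real.sq_sqrt (div_nonneg hγ0.le hA.le)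
    have hk0 : 0 ≤ κ s := Real.sqrt_nonneg _
    have hk2le : (κ s) ^ 2 ≤ 1 := by
      rw [hk2, div_le_one hA]; linarith
    refine ⟨hk0, by nlinarith, ?_⟩
    rw [hk2]; field_simp; ring
  set u : ℕ → ℝ := fun n => κ^[n] (κ t) with hu
  -- invariant
  have hinv : ∀ n : ℕ, 0 ≤ u n ∧ u n ≤ 1 ∧
      (1 - (u n) ^ 2) * (γ - t ^ 2) * γ ^ (n + 1) = (1 - t ^ 2) * (γ - (u n) ^ 2) := by
    intro n
    induction n with
    | zero =>
      obtain ⟨h0, h1, h2⟩ := hstep t ht2'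
      refine ⟨h0, h1, ?_⟩
      have hu0 : u 0 = κ t := rfl
      rw [hu0, pow_one]
      linear_combination h2
    | succ n ih =>
      obtain ⟨h0, h1, h2⟩ := ih
      have hsq : (u n) ^ 2 ≤ 1 := by nlinarith
      obtain ⟨g0, g1, g2⟩ := hstep (u n) hsq
      have hsucc : u (n + 1) = κ (u n) := Function.iterate_succ_apply' κ n (κ t)
      refine ⟨by rw [hsucc]; exact g0, by rw [hsucc]; exact g1, ?_⟩
      have hpos : (0:ℝ) < γ - (u n) ^ 2 := by nlinarith
      have key : ((1 - (u (n + 1)) ^ 2) * (γ - t ^ 2) * γ ^ (n + 1 + 1)) * (γ - (u n) ^ 2)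
          = ((1 - t ^ 2) * (γ - (u (n + 1)) ^ 2)) * (γ - (u n) ^ 2) := by
        rw [hsucc]
        linear_combination ((γ - t ^ 2) * γ ^ (n + 1)) * g2 + (γ - (κ (u n)) ^ 2) * h2
      exact mul_right_cancel₀ hpos.ne' key
  -- u tends to 1
  have hbound : ∀ n, 1 - u n ≤ ((1 - t ^ 2) * γ / (γ - t ^ 2)) * (1 / γ) ^ (n + 1) := by
    intro n
    obtain ⟨h0, h1, h2⟩ := hinv n
    have hP : (0:ℝ) < γ ^ (n + 1) := pow_pos hγ0 _
    have hmul : (1 - u n) * ((γ - t ^ 2) * γ ^ (n + 1)) ≤ (1 - t ^ 2) * γ := by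
      nlinarith [mul_nonneg (mul_nonneg (mul_nonneg h0 (sub_nonneg.mpr h1)) hγt.le) hP.le,
        mul_nonneg ht2n (sq_nonneg (u n))]
    have hrw : ((1 - t ^ 2) * γ / (γ - t ^ 2)) * (1 / γ) ^ (n + 1)
        = ((1 - t ^ 2) * γ) / ((γ - t ^ 2) * γ ^ (n + 1)) := by
      rw [one_div, inv_pow, ← div_eq_mul_inv, div_div]
    rw [hrw, le_div_iff₀ (by positivity)]
    exact hmul
  have hgeo : Tendsto (fun n : ℕ => (1 / γ) ^ n) atTop (𝓝 (0:ℝ)) :=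
    tendsto_pow_atTop_nhds_zero_of_lt_one (by positivity) ((div_lt_one hγ0).mpr hγ)
  have hg0 : Tendsto (fun n : ℕ => ((1 - t ^ 2) * γ / (γ - t ^ 2)) * (1 / γ) ^ (n + 1))
      atTop (𝓝 (0:ℝ)) := by
    simpa using (hgeo.comp (tendsto_add_atTop_nat 1)).const_mul ((1 - t ^ 2) * γ / (γ - t ^ 2))
  have hlim : Tendsto (fun n => 1 - u n) atTop (𝓝 (0:ℝ)) :=
    squeeze_zero (fun n => by linarith [(hinv n).2.1]) hbound hg0
  have hu1 : Tendsto u atTop (𝓝 1) := by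
    have := hlim.const_sub 1
    simpa using this
  -- closed form for the rescaled sequence
  have hform : ∀ n, γ ^ (n + 1) * (1 - u n)
      = (1 - t ^ 2) * (γ - (u n) ^ 2) / ((γ - t ^ 2) * (1 + u n)) := by
    intro n
    obtain ⟨h0, h1, h2⟩ := hinv n
    have hd : (0:ℝ) < (γ - t ^ 2) * (1 + u n) := mul_pos hγt (by linarith)
    rw [eq_div_iff hd.ne']
    linear_combination h2
  -- limit of the closed form
  have hden : Tendsto (fun n => (γ - t ^ 2) * (1 + u n)) atTop (𝓝 ((γ - t ^ 2) * 2)) := by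
    have : Tendsto (fun n => (γ - t ^ 2) * (1 + u n)) atTop (𝓝 ((γ - t ^ 2) * (1 + 1))) :=
      tendsto_const_nhds.mul (tendsto_const_nhds.add hu1)
    norm_num at this ⊢
    exact this
  have hnum : Tendsto (fun n => (1 - t ^ 2) * (γ - (u n) ^ 2)) atTop
      (𝓝 ((1 - t ^ 2) * (γ - 1))) := by
    have hu2 : Tendsto (fun n => (u n) ^ 2) atTop (𝓝 1) := by
      simpa using hu1.pow 2
    exact tendsto_const_nhds.mul (tendsto_const_nhds.sub hu2)
  have htend : Tendsto (fun n => (1 - t ^ 2) * (γ - (u n) ^ 2) / ((γ - t ^ 2) * (1 + u n)))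
      atTop (𝓝 ((1 - t ^ 2) * (γ - 1) / ((γ - t ^ 2) * 2))) :=
    hnum.div hden (by positivity)
  have hval : (γ - 1) * (1 - t ^ 2) / (2 * (γ - t ^ 2))
      = (1 - t ^ 2) * (γ - 1) / ((γ - t ^ 2) * 2) := by ring
  rw [hval, ← tendsto_add_atTop_iff_nat 1]
  refine Tendsto.congr (fun n => ?_) htend
  show (1 - t ^ 2) * (γ - (u n) ^ 2) / ((γ - t ^ 2) * (1 + u n))
      = γ ^ (n + 1) * (1 - κ^[n + 1] t)
  rw [Function.iterate_succ_apply]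
  exact (hform n).symm
end

section
/- Define κ : [-1,1] → ℝ by κ(t) = √(1/(2 − t²)), with L-fold iterate κ_L. Then for every integer L ≥ 1 and every t ∈ [-1,1], κ_L(t) = √( (L − (L−1)t²) / (L + 1 − L·t²) ); consequently, lim_{L→∞} L·(1 − κ_L(t)) = 1/2 if |t| < 1, and lim_{L→∞} L·(1 − κ_L(t)) = 0 if |t| = 1. -/
open Filter Topology Set

noncomputable def sparseGaussianKernel (t : ℝ) : ℝ := Real.sqrt (1 / (2 - t ^ 2))

/-! On squares the kernel acts by the parabolic Möbius map `q ↦ 1/(2 - q)`, which conjugates to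
the translation `1/(1 - q) ↦ 1/(1 - q) + 1`. With `a = 1 - t²` this gives, for `L ≥ 1`,
`1 - κ_L(t)² = a/(La + 1)`, so `L(1 - κ_L(t)²)` tends to `1` if `a > 0` and vanishes if `a = 0`.
Since `1 - √q = (1 - q)/(1 + √q)` and `κ_L(t) → 1`, passing to square roots halves the limit. -/

noncomputable def sqKernelMap (q : ℝ) : ℝ := 1 / (2 - q)

lemma sqKernelMap_one : sqKernelMap 1 = 1 := by norm_num [sqKernelMap]

lemma mapsTo_sqKernelMap : MapsTo sqKernelMap (Icc 0 1) (Icc 0 1) := by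
  rintro q ⟨hq0, hq1⟩
  refine ⟨div_nonneg zero_le_one (by linarith), ?_⟩
  rw [sqKernelMap, div_le_one (by linarith)]
  linarith

lemma iterate_sqKernelMap (n : ℕ) {q : ℝ} (hq : q ≤ 1) :
    sqKernelMap^[n] q = 1 - (1 - q) / (n * (1 - q) + 1) := by
  induction n with
  | zero => simp
  | succ n ih =>
    rw [Function.iterate_succ_apply', ih, sqKernelMap, Nat.cast_succ]
    have ha : 0 ≤ 1 - q := sub_nonneg.2 hq
    generalize 1 - q = a at ha ⊢
    have hD : 0 < (n : ℝ) * a + 1 := by positivity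
    have hD' : 0 < ((n : ℝ) + 1) * a + 1 := by positivity
    rw [show 2 - (1 - a / (n * a + 1)) = ((n + 1) * a + 1) / (n * a + 1) by
          rw [eq_div_iff hD.ne', sub_mul, sub_mul, div_mul_cancel₀ _ hD.ne']; ring,
      one_div_div, eq_sub_iff_add_eq, ← add_div, div_eq_one_iff_eq hD'.ne']
    ring

lemma iterate_sqKernelMap_eq_div (n : ℕ) {q : ℝ} (hq : q ≤ 1) :
    sqKernelMap^[n] q = (n - (n - 1) * q) / (n + 1 - n * q) := by
  have hD : 0 < (n : ℝ) * (1 - q) + 1 := by have := sub_nonneg.2 hq; positivity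
  rw [iterate_sqKernelMap n hq, show (n : ℝ) + 1 - n * q = n * (1 - q) + 1 by ring,
    eq_div_iff hD.ne', sub_mul, div_mul_cancel₀ _ hD.ne']
  ring

lemma tendsto_mul_one_sub_iterate_sqKernelMap {q : ℝ} (hq : q < 1) :
    Tendsto (fun n : ℕ => (n : ℝ) * (1 - sqKernelMap^[n] q)) atTop (𝓝 1) := by
  have ha : 1 - q ≠ 0 := (sub_pos.2 hq).ne'
  refine (tendsto_natCast_div_add_atTop (1 / (1 - q))).congr fun n => ?_
  rw [iterate_sqKernelMap n hq.le]
  field_simp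
  ring

lemma sq_mem_Icc_zero_one {t : ℝ} (ht : t ∈ Icc (-1 : ℝ) 1) : t ^ 2 ∈ Icc (0 : ℝ) 1 :=
  ⟨sq_nonneg t, (sq_le_one_iff_abs_le_one t).2 (abs_le.2 ht)⟩

lemma sparseGaussianKernel_eq (t : ℝ) :
    sparseGaussianKernel t = Real.sqrt (sqKernelMap (t ^ 2)) := rfl

lemma sparseGaussianKernel_sqrt {q : ℝ} (hq : 0 ≤ q) :
    sparseGaussianKernel (Real.sqrt q) = Real.sqrt (sqKernelMap q) := by
  rw [sparseGaussianKernel_eq, Real.sq_sqrt hq]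

lemma iterate_sparseGaussianKernel_sqrt (n : ℕ) {q : ℝ} (hq : q ∈ Icc (0 : ℝ) 1) :
    sparseGaussianKernel^[n] (Real.sqrt q) = Real.sqrt (sqKernelMap^[n] q) := by
  induction n generalizing q with
  | zero => rfl
  | succ n ih =>
    rw [Function.iterate_succ_apply, sparseGaussianKernel_sqrt hq.1,
      ih (mapsTo_sqKernelMap hq), Function.iterate_succ_apply]

lemma iterate_sparseGaussianKernel {L : ℕ} (hL : 1 ≤ L) {t : ℝ} (ht : t ∈ Icc (-1 : ℝ) 1) :
    sparseGaussianKernel^[L] t = Real.sqrt (sqKernelMap^[L] (t ^ 2)) := by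
  obtain ⟨n, rfl⟩ := Nat.exists_eq_add_of_le' hL
  have ht2 := sq_mem_Icc_zero_one ht
  rw [Function.iterate_succ_apply, Function.iterate_succ_apply, sparseGaussianKernel_eq,
    iterate_sparseGaussianKernel_sqrt n (mapsTo_sqKernelMap ht2)]

lemma tendsto_mul_one_sub_sqrt {q : ℕ → ℝ} {c : ℝ} (hq : ∀ n, 0 ≤ q n)
    (h : Tendsto (fun n : ℕ => (n : ℝ) * (1 - q n)) atTop (𝓝 c)) :
    Tendsto (fun n : ℕ => (n : ℝ) * (1 - Real.sqrt (q n))) atTop (𝓝 (c / 2)) := by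
  have hq1 : Tendsto q atTop (𝓝 1) := by
    have h0 : Tendsto (fun n : ℕ => 1 - q n) atTop (𝓝 0) := by
      refine (h.div_atTop tendsto_natCast_atTop_atTop).congr' ?_
      filter_upwards [eventually_ne_atTop 0] with n hn
      field_simp
    simpa using h0.const_sub 1
  have hsqrt : Tendsto (fun n => 1 + Real.sqrt (q n)) atTop (𝓝 2) := by
    simpa [one_add_one_eq_two] using hq1.sqrt.const_add 1
  refine (h.div hsqrt two_ne_zero).congr fun n => ?_
  rw [Pi.div_apply, div_eq_iff (by positivity)]
  linear_combination (n : ℝ) * Real.sq_sqrt (hq n)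

lemma tendsto_mul_one_sub_iterate_sparseGaussianKernel {t c : ℝ} (ht : t ∈ Icc (-1 : ℝ) 1)
    (h : Tendsto (fun n : ℕ => (n : ℝ) * (1 - sqKernelMap^[n] (t ^ 2))) atTop (𝓝 c)) :
    Tendsto (fun L : ℕ => (L : ℝ) * (1 - sparseGaussianKernel^[L] t)) atTop (𝓝 (c / 2)) := by
  have ht2 := sq_mem_Icc_zero_one ht
  refine (tendsto_mul_one_sub_sqrt (fun n => (mapsTo_sqKernelMap.iterate n ht2).1) h).congr' ?_
  filter_upwards [eventually_ge_atTop 1] with L hL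
  rw [iterate_sparseGaussianKernel hL ht]

/-- For `κ(t) = √(1/(2−t²))`, the `L`-fold iterate is
`κ_L(t) = √((L − (L−1)t²)/(L+1 − Lt²))`; consequently `L(1 − κ_L(t)) → 1/2` when `|t| < 1`
and `L(1 − κ_L(t)) → 0` when `|t| = 1`. -/
theorem sparse_gaussian_kernel_iterates :
    (∀ L : ℕ, 1 ≤ L → ∀ t ∈ Icc (-1 : ℝ) 1,
      sparseGaussianKernel^[L] t =
        Real.sqrt (((L : ℝ) - ((L : ℝ) - 1) * t ^ 2) / ((L : ℝ) + 1 - (L : ℝ) * t ^ 2))) ∧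
    (∀ t : ℝ, |t| < 1 →
      Tendsto (fun L : ℕ => (L : ℝ) * (1 - sparseGaussianKernel^[L] t)) atTop (𝓝 (1 / 2))) ∧
    (∀ t : ℝ, |t| = 1 →
      Tendsto (fun L : ℕ => (L : ℝ) * (1 - sparseGaussianKernel^[L] t)) atTop (𝓝 0)) := by
  refine ⟨fun L hL t ht => ?_, fun t ht => ?_, fun t ht => ?_⟩
  · rw [iterate_sparseGaussianKernel hL ht,
      iterate_sqKernelMap_eq_div L (sq_mem_Icc_zero_one ht).2]
  · exact tendsto_mul_one_sub_iterate_sparseGaussianKernel (abs_le.1 ht.le)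
      (tendsto_mul_one_sub_iterate_sqKernelMap ((sq_lt_one_iff_abs_lt_one t).2 ht))
  · have ht2 : t ^ 2 = 1 := by rw [← sq_abs, ht, one_pow]
    simpa using tendsto_mul_one_sub_iterate_sparseGaussianKernel (abs_le.1 ht.le)
      (c := 0) (by simp [ht2, Function.iterate_fixed sqKernelMap_one])
end
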